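/- If n is even, then the centralizer of 𝔑 in 𝒲 equals F·D_H(x^ω); that is, {D ∈ 𝒲 : [D, X] = 0 for all X ∈ 𝔑} = F·D_H(x^ω). -/

import Mathlib

/-!
A concrete model of the divided power superalgebra `O(2m,n;t)` over a field `F` of
characteristic `p`, the generalized Witt superalgebra `W(2m,n;t)`, the Hamiltonian
superalgebra `H(2m,n;t)`, their even parts `𝒲`, `𝓗`, the ideal `𝔑`, and the
exceptional maps `Φ`, `Θ`, `Ψ`, used in
"Derivations for the even part of the Hamiltonian superalgebra in positive characteristic".

Elements of `O` are recorded by their coordinates with respect to the standard basis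
`x^(α) x^u`, where `α i < p ^ t i` and `u ⊆ {1,…,n}` (odd variables).
A superderivation `Σ aᵢ ∂ᵢ ∈ W` is recorded by its tuple of coefficients `aᵢ ∈ O`.
-/

namespace HamEven

/-- Multi-indices `α` with `α i ≤ π i = p ^ t i - 1`. -/
abbrev MIdx (p m : ℕ) (t : Fin (2 * m) → ℕ) : Type := ∀ i : Fin (2 * m), Fin (p ^ t i)

/-- Basis indices `(α, u)` of `O(2m,n;t)`, i.e. `x^(α) x^u`. -/
abbrev BIdx (p m n : ℕ) (t : Fin (2 * m) → ℕ) : Type := MIdx p m t × Finset (Fin n)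

/-- The underlying space of `O(2m,n;t)`: coordinates w.r.t. the basis `x^(α)x^u`. -/
abbrev O (p m n : ℕ) (t : Fin (2 * m) → ℕ) (F : Type) [Field F] : Type := BIdx p m n t → F

/-- The index set `Y = Y₀ ∪ Y₁` of the variables. -/
abbrev Y (m n : ℕ) : Type := Fin (2 * m) ⊕ Fin n

/-- The underlying space of `W(2m,n;t)`: a tuple `(aᵢ)` stands for `Σ aᵢ ∂ᵢ`. -/
abbrev W (p m n : ℕ) (t : Fin (2 * m) → ℕ) (F : Type) [Field F] : Type := Y m n → O p m n t F

/-- The sign `ε(u,v)` with `x^u x^v = ε(u,v) x^(u ∪ v)` for disjoint `u, v`. -/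
def sgn (n : ℕ) (F : Type) [Field F] (u v : Finset (Fin n)) : F :=
  (-1 : F) ^ ((u ×ˢ v).filter fun q => q.2 < q.1).card

/-- Multiplication of the divided power superalgebra `O(2m,n;t)`:
`x^(α)x^u · x^(β)x^v = ε(u,v) (∏ᵢ binom (αᵢ+βᵢ) αᵢ) x^(α+β) x^(u∪v)` for disjoint
`u,v` (and `0` if `u ∩ v ≠ ∅` or `α + β ∉ A`). -/
def mul (p m n : ℕ) (t : Fin (2 * m) → ℕ) (F : Type) [Field F]
    (f g : O p m n t F) : O p m n t F := fun b =>
  ∑ α : MIdx p m t, ∑ u ∈ b.2.powerset,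
    if ∀ i, (α i : ℕ) ≤ (b.1 i : ℕ) then
      sgn n F u (b.2 \ u) * (∏ i, ((b.1 i : ℕ).choose (α i : ℕ) : F)) *
        f (α, u) *
        g (⟨fun i => (⟨(b.1 i : ℕ) - (α i : ℕ),
              lt_of_le_of_lt (Nat.sub_le _ _) (b.1 i).isLt⟩ : Fin (p ^ t i)), b.2 \ u⟩)
    else 0

/-- The superderivation `∂ᵢ` for an even index `i ∈ Y₀`. -/
def pdE (p m n : ℕ) (t : Fin (2 * m) → ℕ) (F : Type) [Field F]
    (i : Fin (2 * m)) (f : O p m n t F) : O p m n t F := fun b =>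
  if h : (b.1 i : ℕ) + 1 < p ^ t i then
    f (⟨Function.update b.1 i (⟨(b.1 i : ℕ) + 1, h⟩ : Fin (p ^ t i)), b.2⟩)
  else 0

/-- The superderivation `∂ₖ` for an odd index `k ∈ Y₁`. -/
def pdO (p m n : ℕ) (t : Fin (2 * m) → ℕ) (F : Type) [Field F]
    (k : Fin n) (f : O p m n t F) : O p m n t F := fun b =>
  if k ∈ b.2 then 0
  else ((-1 : F) ^ (b.2.filter fun j => j < k).card) * f (b.1, insert k b.2)

/-- The superderivation `∂ᵢ`, `i ∈ Y`. -/
def pd (p m n : ℕ) (t : Fin (2 * m) → ℕ) (F : Type) [Field F]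
    (i : Y m n) (f : O p m n t F) : O p m n t F :=
  match i with
  | Sum.inl i => pdE p m n t F i f
  | Sum.inr k => pdO p m n t F k f

/-- The action of `D = Σ aᵢ ∂ᵢ ∈ W` on `O`: `D(f) = Σ aᵢ ∂ᵢ(f)`. -/
def act (p m n : ℕ) (t : Fin (2 * m) → ℕ) (F : Type) [Field F]
    (D : W p m n t F) (f : O p m n t F) : O p m n t F :=
  ∑ i : Y m n, mul p m n t F (D i) (pd p m n t F i f)

/-- Projection of `f ∈ O` onto its even part (w.r.t. the ℤ₂-grading). -/
def evenO (p m n : ℕ) (t : Fin (2 * m) → ℕ) (F : Type) [Field F]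
    (f : O p m n t F) : O p m n t F := fun b => if b.2.card % 2 = 0 then f b else 0

/-- Projection of `f ∈ O` onto its odd part. -/
def oddO (p m n : ℕ) (t : Fin (2 * m) → ℕ) (F : Type) [Field F]
    (f : O p m n t F) : O p m n t F := fun b => if b.2.card % 2 = 1 then f b else 0

/-- Projection of `D ∈ W` onto its odd part (the coefficient of `∂ᵢ` is taken of
parity opposite to that of `∂ᵢ`). -/
def oddW (p m n : ℕ) (t : Fin (2 * m) → ℕ) (F : Type) [Field F]
    (D : W p m n t F) : W p m n t F := fun i =>
  match i with
  | Sum.inl j => oddO p m n t F (D (Sum.inl j))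
  | Sum.inr k => evenO p m n t F (D (Sum.inr k))

/-- The super-bracket of `W`.  On homogeneous `D = Σ aᵢ∂ᵢ`, `E = Σ bⱼ∂ⱼ` it is
`[D,E] = Σ D(bⱼ)∂ⱼ - (-1)^{p(D)p(E)} Σ E(aᵢ)∂ᵢ`, extended bilinearly; this gives the
closed formula `[D,E] = D(E) - E(D) + 2 E₁(D₁)` used here. -/
def bra (p m n : ℕ) (t : Fin (2 * m) → ℕ) (F : Type) [Field F]
    (D E : W p m n t F) : W p m n t F := fun j =>
  act p m n t F D (E j) - act p m n t F E (D j)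
    + act p m n t F (oddW p m n t F E) (oddW p m n t F D j)
    + act p m n t F (oddW p m n t F E) (oddW p m n t F D j)

/-- `τ(i)` for `i ∈ Y₀`. -/
def tauF (m : ℕ) (F : Type) [Field F] (i : Fin (2 * m)) : F :=
  if (i : ℕ) < m then 1 else -1

/-- `i ↦ i′` on `Y₀`. -/
def primeE (m : ℕ) (i : Fin (2 * m)) : Fin (2 * m) :=
  if h : (i : ℕ) < m then ⟨(i : ℕ) + m, by have := i.isLt; omega⟩
  else ⟨(i : ℕ) - m, by have := i.isLt; omega⟩

/-- The linear map `D_H : O → W`,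
`D_H(a) = Σ_{i ∈ Y} τ(i) (-1)^{μ(i) p(a)} ∂ᵢ(a) ∂ᵢ′` (on ℤ₂-homogeneous `a`,
extended linearly): the coefficient of `∂ⱼ` is `τ(j′) (-1)^{μ(j′)p(a)} ∂_{j′}(a)`. -/
def DH (p m n : ℕ) (t : Fin (2 * m) → ℕ) (F : Type) [Field F]
    (a : O p m n t F) : W p m n t F := fun j =>
  match j with
  | Sum.inl j' =>
      tauF m F (primeE m j') •
        (pdE p m n t F (primeE m j') (evenO p m n t F a)
          + pdE p m n t F (primeE m j') (oddO p m n t F a))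
  | Sum.inr k =>
      pdO p m n t F k (evenO p m n t F a) - pdO p m n t F k (oddO p m n t F a)

/-- The basis element `x^(α) x^u` of `O`. -/
def xE (p m n : ℕ) (t : Fin (2 * m) → ℕ) (F : Type) [Field F]
    (α : MIdx p m t) (u : Finset (Fin n)) : O p m n t F := fun b =>
  if b = (α, u) then 1 else 0

/-- The element `x^ω = x_{2m+1} ⋯ x_{2m+n}` of `O`. -/
def xOmega (p m n : ℕ) (t : Fin (2 * m) → ℕ) (F : Type) [Field F] : O p m n t F := fun b =>
  if (∀ i, (b.1 i : ℕ) = 0) ∧ b.2 = Finset.univ then 1 else 0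

/-- The identity `1 ∈ O`. -/
def oneO (p m n : ℕ) (t : Fin (2 * m) → ℕ) (F : Type) [Field F] : O p m n t F := fun b =>
  if (∀ i, (b.1 i : ℕ) = 0) ∧ b.2 = ∅ then 1 else 0

/-- The odd variable `xₖ ∈ O`, `k ∈ Y₁`. -/
def xOdd (p m n : ℕ) (t : Fin (2 * m) → ℕ) (F : Type) [Field F] (k : Fin n) :
    O p m n t F := fun b =>
  if (∀ i, (b.1 i : ℕ) = 0) ∧ b.2 = {k} then 1 else 0

/-- `Γ′ = Σ_{r ∈ Y₁} x_r ∂_r ∈ 𝒲`. -/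
def GammaP (p m n : ℕ) (t : Fin (2 * m) → ℕ) (F : Type) [Field F] : W p m n t F := fun j =>
  match j with
  | Sum.inl _ => 0
  | Sum.inr k => xOdd p m n t F k

/-- The element `∂_r ∈ W` for `r ∈ Y₀`. -/
def delW (p m n : ℕ) (t : Fin (2 * m) → ℕ) (F : Type) [Field F] (r : Fin (2 * m)) :
    W p m n t F := fun j =>
  if j = Sum.inl r then oneO p m n t F else 0

/-- `𝒲`, the even part of `W(2m,n;t)`: the term `a ∂ⱼ` with `a = x^(α)x^u` is even iff
`|u| + μ(j)` is even. -/
def calW (p m n : ℕ) (t : Fin (2 * m) → ℕ) (F : Type) [Field F] : Set (W p m n t F) :=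
  {D | ∀ (j : Y m n) (b : BIdx p m n t),
    ¬ ((b.2.card + (match j with | Sum.inl _ => 0 | Sum.inr _ => 1)) % 2 = 0) → D j b = 0}

/-- The predicate `α = π`, i.e. `αᵢ = p ^ tᵢ - 1` for all `i`. -/
def isPi (p m : ℕ) (t : Fin (2 * m) → ℕ) (α : MIdx p m t) : Prop :=
  ∀ i, (α i : ℕ) = p ^ t i - 1

/-- The predicate `α = q εᵢ`. -/
def isSingle (p m : ℕ) (t : Fin (2 * m) → ℕ) (α : MIdx p m t) (i : Fin (2 * m))
    (q : ℕ) : Prop :=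
  (α i : ℕ) = q ∧ ∀ j, j ≠ i → (α j : ℕ) = 0

/-- `𝓗`, the even part of the Hamiltonian superalgebra `H(2m,n;t)`:
the span of the `D_H(x^(α)x^u)` with `|u|` even and `(α,u) ≠ (π,ω)`. -/
def calH (p m n : ℕ) (t : Fin (2 * m) → ℕ) (F : Type) [Field F] :
    Submodule F (W p m n t F) :=
  Submodule.span F {D | ∃ (α : MIdx p m t) (u : Finset (Fin n)),
    Even u.card ∧ ¬(isPi p m t α ∧ u = Finset.univ) ∧ D = DH p m n t F (xE p m n t F α u)}

/-- The ideal `𝔑` of `𝓗`: the span of the `D_H(x^(α)x^u)` with `|u|` even,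
`(α,u) ≠ (π,ω)` and `(α,u) ≠ (π,∅)`. -/
def frakN (p m n : ℕ) (t : Fin (2 * m) → ℕ) (F : Type) [Field F] :
    Submodule F (W p m n t F) :=
  Submodule.span F {D | ∃ (α : MIdx p m t) (u : Finset (Fin n)),
    Even u.card ∧ ¬(isPi p m t α ∧ u = Finset.univ) ∧ ¬(isPi p m t α ∧ u = ∅) ∧
    D = DH p m n t F (xE p m n t F α u)}

/-- The ℤ-degree of the basis element `x^(α)x^u ∈ O`. -/
def degB (p m n : ℕ) (t : Fin (2 * m) → ℕ) (b : BIdx p m n t) : ℕ :=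
  (∑ i, (b.1 i : ℕ)) + b.2.card

/-- `D ∈ W_[k]`: all coefficients of `D` are concentrated in `O`-degree `k + 1`. -/
def inDeg (p m n : ℕ) (t : Fin (2 * m) → ℕ) (F : Type) [Field F]
    (k : ℤ) (D : W p m n t F) : Prop :=
  ∀ (j : Y m n) (b : BIdx p m n t), (degB p m n t b : ℤ) - 1 ≠ k → D j b = 0

/-- `D` lies in the top `W_[-1] ⊕ W_[0]` (so the order of its coefficients is `≤ 1`). -/
def inTop (p m n : ℕ) (t : Fin (2 * m) → ℕ) (F : Type) [Field F]
    (D : W p m n t F) : Prop :=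
  ∀ (j : Y m n) (b : BIdx p m n t),
    (degB p m n t b : ℤ) ≠ 0 → (degB p m n t b : ℤ) ≠ 1 → D j b = 0

/-- `φ : S → W` is `F`-linear. -/
def IsLinearOn (p m n : ℕ) (t : Fin (2 * m) → ℕ) (F : Type) [Field F]
    (S : Submodule F (W p m n t F)) (φ : S → W p m n t F) : Prop :=
  (∀ x y : S, φ (x + y) = φ x + φ y) ∧ ∀ (c : F) (x : S), φ (c • x) = c • φ x

/-- `φ ∈ Der(S, 𝒲)`: an `F`-linear map `S → 𝒲 ⊆ W` with
`φ([x,y]) = [x, φ(y)] - [y, φ(x)]` whenever `x, y, [x,y] ∈ S`. -/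
def IsDerOn (p m n : ℕ) (t : Fin (2 * m) → ℕ) (F : Type) [Field F]
    (S : Submodule F (W p m n t F)) (φ : S → W p m n t F) : Prop :=
  IsLinearOn p m n t F S φ ∧ (∀ x : S, φ x ∈ calW p m n t F) ∧
  ∀ (x y : S) (h : bra p m n t F (↑x) (↑y) ∈ S),
    φ ⟨bra p m n t F (↑x) (↑y), h⟩ =
      bra p m n t F (↑x) (φ y) - bra p m n t F (↑y) (φ x)

/-- `φ ∈ Der_[r](S, W)`: `φ` is ℤ-homogeneous of ℤ-degree `r`, i.e.
`φ(S_[k]) ⊆ W_[r+k]` for all `k`. -/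
def IsHomogOn (p m n : ℕ) (t : Fin (2 * m) → ℕ) (F : Type) [Field F]
    (S : Submodule F (W p m n t F)) (r : ℤ) (φ : S → W p m n t F) : Prop :=
  ∀ (k : ℤ) (x : S), inDeg p m n t F k (↑x) → inDeg p m n t F (r + k) (φ x)

/-- The exceptional map `Φ⁽q⁾ᵢ : 𝓗 → 𝒲`, `D_H(f) ↦ ∂ᵢ^(p^q)(f) D_H(x^ω)`, extended to
`W` using that the `∂ᵢ′`-coefficient of `D_H(f)` is `τ(i) ∂ᵢ(f)` for even `f`. -/
def PhiW (p m n : ℕ) (t : Fin (2 * m) → ℕ) (F : Type) [Field F]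
    (i : Fin (2 * m)) (q : ℕ) (D : W p m n t F) : W p m n t F := fun j =>
  mul p m n t F
    ((pdE p m n t F i)^[p ^ q - 1] (tauF m F i • D (Sum.inl (primeE m i))))
    (DH p m n t F (xOmega p m n t F) j)

/-- The exceptional map `Θ⁽q⁾ᵢ : 𝓗 → 𝒲`,
`D_H(f) ↦ x^ω D_H(∂ᵢ^(p^q)(f)) = x^ω (ad ∂ᵢ)^(p^q)(D_H(f))`. -/
def ThetaW (p m n : ℕ) (t : Fin (2 * m) → ℕ) (F : Type) [Field F]
    (i : Fin (2 * m)) (q : ℕ) (D : W p m n t F) : W p m n t F := fun j =>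
  mul p m n t F (xOmega p m n t F) ((pdE p m n t F i)^[p ^ q] (D j))

/-- The exceptional map `Ψ⁽ⁱ⁾ : 𝓗 → 𝒲`, `D_H(f) ↦ ∂ᵢ∂ᵢ′(f) D_H(x^ω)`. -/
def PsiW (p m n : ℕ) (t : Fin (2 * m) → ℕ) (F : Type) [Field F]
    (i : Fin (2 * m)) (D : W p m n t F) : W p m n t F := fun j =>
  mul p m n t F
    (pdE p m n t F (primeE m i) (tauF m F i • D (Sum.inl (primeE m i))))
    (DH p m n t F (xOmega p m n t F) j)

/-- `(ad ∂_r)^e : W → W`. -/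
def adPow (p m n : ℕ) (t : Fin (2 * m) → ℕ) (F : Type) [Field F]
    (r : Fin (2 * m)) (e : ℕ) : W p m n t F → W p m n t F :=
  (fun D => bra p m n t F (delW p m n t F r) D)^[e]

section Aux
variable {p m n : ℕ} {t : Fin (2 * m) → ℕ} {F : Type} [Field F]

/-! ### Basic algebraic lemmas -/

lemma mul_zero_right (f : O p m n t F) : mul p m n t F f 0 = 0 := by
  funext b; simp [mul]

lemma mul_zero_left (g : O p m n t F) : mul p m n t F 0 g = 0 := by
  funext b; simp [mul]

lemma mul_smul_left (c : F) (f g : O p m n t F) :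
    mul p m n t F (c • f) g = c • mul p m n t F f g := by
  funext b
  simp only [mul, Pi.smul_apply, smul_eq_mul, Finset.mul_sum]
  refine Finset.sum_congr rfl fun a _ => Finset.sum_congr rfl fun u _ => ?_
  split <;> ring

lemma mul_smul_right (c : F) (f g : O p m n t F) :
    mul p m n t F f (c • g) = c • mul p m n t F f g := by
  funext b
  simp only [mul, Pi.smul_apply, smul_eq_mul, Finset.mul_sum]
  refine Finset.sum_congr rfl fun a _ => Finset.sum_congr rfl fun u _ => ?_
  split <;> ring

lemma mul_add_right (f g h : O p m n t F) :
    mul p m n t F f (g + h) = mul p m n t F f g + mul p m n t F f h := by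
  funext b
  simp only [mul, Pi.add_apply, ← Finset.sum_add_distrib]
  refine Finset.sum_congr rfl fun a _ => Finset.sum_congr rfl fun u _ => ?_
  split <;> ring

lemma pdE_zero (i : Fin (2 * m)) : pdE p m n t F i 0 = 0 := by
  funext b; simp [pdE]

lemma pdE_smul (c : F) (i : Fin (2 * m)) (f : O p m n t F) :
    pdE p m n t F i (c • f) = c • pdE p m n t F i f := by
  funext b; simp only [pdE, Pi.smul_apply, smul_eq_mul]; split <;> simp

lemma pdE_add (i : Fin (2 * m)) (f g : O p m n t F) :
    pdE p m n t F i (f + g) = pdE p m n t F i f + pdE p m n t F i g := by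
  funext b; simp only [pdE, Pi.add_apply]; split <;> simp

lemma pdO_zero (k : Fin n) : pdO p m n t F k 0 = 0 := by
  funext b; simp [pdO]

lemma pdO_smul (c : F) (k : Fin n) (f : O p m n t F) :
    pdO p m n t F k (c • f) = c • pdO p m n t F k f := by
  funext b; simp only [pdO, Pi.smul_apply, smul_eq_mul]; split <;> ring

lemma pdO_add (k : Fin n) (f g : O p m n t F) :
    pdO p m n t F k (f + g) = pdO p m n t F k f + pdO p m n t F k g := by
  funext b; simp only [pdO, Pi.add_apply]; split <;> ring

lemma pd_zero (i : Y m n) : pd p m n t F i 0 = 0 := by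
  cases i <;> simp [pd, pdE_zero, pdO_zero]

lemma pd_smul (c : F) (i : Y m n) (f : O p m n t F) :
    pd p m n t F i (c • f) = c • pd p m n t F i f := by
  cases i <;> simp [pd, pdE_smul, pdO_smul]

lemma pd_add (i : Y m n) (f g : O p m n t F) :
    pd p m n t F i (f + g) = pd p m n t F i f + pd p m n t F i g := by
  cases i <;> simp [pd, pdE_add, pdO_add]

lemma act_apply (D : W p m n t F) (f : O p m n t F) (b : BIdx p m n t) :
    act p m n t F D f b = ∑ i : Y m n, mul p m n t F (D i) (pd p m n t F i f) b := by
  simp [act, Finset.sum_apply]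

lemma act_split (D : W p m n t F) (f : O p m n t F) (b : BIdx p m n t) :
    act p m n t F D f b =
      (∑ j : Fin (2 * m), mul p m n t F (D (Sum.inl j)) (pdE p m n t F j f) b) +
        ∑ k : Fin n, mul p m n t F (D (Sum.inr k)) (pdO p m n t F k f) b := by
  rw [act_apply, Fintype.sum_sum_type]; rfl

lemma act_zero_right (D : W p m n t F) : act p m n t F D 0 = 0 := by
  funext b; rw [act_apply]
  exact Finset.sum_eq_zero fun i _ => by rw [pd_zero, mul_zero_right]; rfl

lemma act_zero_left (f : O p m n t F) : act p m n t F 0 f = 0 := by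
  funext b; rw [act_apply]
  exact Finset.sum_eq_zero fun i _ => by
    show mul p m n t F 0 _ b = 0
    rw [mul_zero_left]; rfl

lemma act_smul_right (c : F) (D : W p m n t F) (f : O p m n t F) :
    act p m n t F D (c • f) = c • act p m n t F D f := by
  funext b; rw [act_apply, Pi.smul_apply, act_apply, smul_eq_mul, Finset.mul_sum]
  exact Finset.sum_congr rfl fun i _ => by rw [pd_smul, mul_smul_right]; simp

lemma act_add_right (D : W p m n t F) (f g : O p m n t F) :
    act p m n t F D (f + g) = act p m n t F D f + act p m n t F D g := by
  funext b
  rw [act_apply, Pi.add_apply, act_apply, act_apply, ← Finset.sum_add_distrib]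
  exact Finset.sum_congr rfl fun i _ => by rw [pd_add, mul_add_right]; rfl

end Aux
section Aux2
variable {p m n : ℕ} {t : Fin (2 * m) → ℕ} {F : Type} [Field F]

lemma evenO_zero : evenO p m n t F 0 = 0 := by funext b; simp [evenO]
lemma oddO_zero : oddO p m n t F 0 = 0 := by funext b; simp [oddO]

lemma evenO_smul (c : F) (f : O p m n t F) :
    evenO p m n t F (c • f) = c • evenO p m n t F f := by
  funext b; simp only [evenO, Pi.smul_apply, smul_eq_mul]; split <;> simp

lemma oddO_smul (c : F) (f : O p m n t F) :
    oddO p m n t F (c • f) = c • oddO p m n t F f := by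
  funext b; simp only [oddO, Pi.smul_apply, smul_eq_mul]; split <;> simp

lemma evenO_add (f g : O p m n t F) :
    evenO p m n t F (f + g) = evenO p m n t F f + evenO p m n t F g := by
  funext b; simp only [evenO, Pi.add_apply]; split <;> simp

lemma oddO_add (f g : O p m n t F) :
    oddO p m n t F (f + g) = oddO p m n t F f + oddO p m n t F g := by
  funext b; simp only [oddO, Pi.add_apply]; split <;> simp

lemma evenO_add_oddO (f : O p m n t F) :
    evenO p m n t F f + oddO p m n t F f = f := by
  funext b
  simp only [evenO, oddO, Pi.add_apply]
  rcases Nat.even_or_odd b.2.card with h | h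
  · rw [Nat.even_iff] at h; simp [h]
  · rw [Nat.odd_iff] at h; simp [h]

lemma oddW_zero : oddW p m n t F 0 = 0 := by
  funext i; cases i <;> simp [oddW, evenO_zero, oddO_zero]

lemma oddW_smul (c : F) (D : W p m n t F) :
    oddW p m n t F (c • D) = c • oddW p m n t F D := by
  funext i; cases i <;> simp [oddW, evenO_smul, oddO_smul]

lemma oddW_add (D E : W p m n t F) :
    oddW p m n t F (D + E) = oddW p m n t F D + oddW p m n t F E := by
  funext i; cases i <;> simp [oddW, evenO_add, oddO_add]

lemma act_smul_left (c : F) (D : W p m n t F) (f : O p m n t F) :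
    act p m n t F (c • D) f = c • act p m n t F D f := by
  funext b; rw [act_apply, Pi.smul_apply, act_apply, smul_eq_mul, Finset.mul_sum]
  exact Finset.sum_congr rfl fun i _ => by
    show mul p m n t F (c • D i) _ b = _
    rw [mul_smul_left]; simp

lemma act_add_left (D E : W p m n t F) (f : O p m n t F) :
    act p m n t F (D + E) f = act p m n t F D f + act p m n t F E f := by
  funext b
  rw [act_apply, Pi.add_apply, act_apply, act_apply, ← Finset.sum_add_distrib]
  refine Finset.sum_congr rfl fun i _ => ?_
  show mul p m n t F (D i + E i) _ b = _
  have : mul p m n t F (D i + E i) (pd p m n t F i f) =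
      mul p m n t F (D i) (pd p m n t F i f) + mul p m n t F (E i) (pd p m n t F i f) := by
    funext b'
    simp only [mul, Pi.add_apply, ← Finset.sum_add_distrib]
    refine Finset.sum_congr rfl fun a _ => Finset.sum_congr rfl fun u _ => ?_
    split <;> ring
  rw [this]; rfl

lemma bra_smul_right (c : F) (D E : W p m n t F) :
    bra p m n t F D (c • E) = c • bra p m n t F D E := by
  funext j b
  simp only [bra, Pi.add_apply, Pi.sub_apply, Pi.smul_apply]
  rw [act_smul_right, act_smul_left, oddW_smul, act_smul_left]
  simp only [Pi.smul_apply, smul_eq_mul]; ring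

lemma bra_add_right (D E E' : W p m n t F) :
    bra p m n t F D (E + E') = bra p m n t F D E + bra p m n t F D E' := by
  funext j b
  simp only [bra, Pi.add_apply, Pi.sub_apply]
  rw [act_add_right, act_add_left, oddW_add, act_add_left]
  simp only [Pi.add_apply]; ring

lemma bra_zero_right (D : W p m n t F) : bra p m n t F D 0 = 0 := by
  funext j b
  have h0 : (0 : W p m n t F) j = 0 := rfl
  simp only [bra, h0, act_zero_right, oddW_zero, act_zero_left]
  simp

lemma bra_sub_smul_left (c : F) (D E X : W p m n t F) :
    bra p m n t F (D - c • E) X = bra p m n t F D X - c • bra p m n t F E X := by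
  have hW : D - c • E = D + (-c) • E := by
    funext i b'; simp only [Pi.sub_apply, Pi.add_apply, Pi.smul_apply, smul_eq_mul]; ring
  funext j b
  simp only [bra, Pi.add_apply, Pi.sub_apply, Pi.smul_apply]
  have e1 : act p m n t F (D - c • E) (X j) b
      = act p m n t F D (X j) b - c * act p m n t F E (X j) b := by
    rw [hW, act_add_left, act_smul_left]
    simp only [Pi.add_apply, Pi.smul_apply, smul_eq_mul]; ring
  have e2 : act p m n t F X (D j - c • E j) b
      = act p m n t F X (D j) b - c * act p m n t F X (E j) b := by
    rw [show D j - c • E j = D j + (-c) • E j from by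
        funext b'; simp only [Pi.sub_apply, Pi.add_apply, Pi.smul_apply, smul_eq_mul]; ring,
      act_add_right, act_smul_right]
    simp only [Pi.add_apply, Pi.smul_apply, smul_eq_mul]; ring
  have e3 : oddW p m n t F (D - c • E) j
      = oddW p m n t F D j + (-c) • oddW p m n t F E j := by
    rw [hW, oddW_add, oddW_smul]; rfl
  have e4 : act p m n t F (oddW p m n t F X) (oddW p m n t F (D - c • E) j) b
      = act p m n t F (oddW p m n t F X) (oddW p m n t F D j) b
        - c * act p m n t F (oddW p m n t F X) (oddW p m n t F E j) b := by
    rw [e3, act_add_right, act_smul_right]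
    simp only [Pi.add_apply, Pi.smul_apply, smul_eq_mul]; ring
  rw [e1, e2, e4]; simp only [smul_eq_mul]; ring

end Aux2
section Basis
variable {p m n : ℕ} {t : Fin (2 * m) → ℕ} {F : Type} [Field F]

/-- Truncated subtraction of multi-indices. -/
def subM (β α : MIdx p m t) : MIdx p m t :=
  fun i => ⟨(β i : ℕ) - (α i : ℕ), lt_of_le_of_lt (Nat.sub_le _ _) (β i).isLt⟩

@[simp] lemma subM_coe (β α : MIdx p m t) (i : Fin (2 * m)) :
    ((subM β α i : Fin (p ^ t i)) : ℕ) = (β i : ℕ) - (α i : ℕ) := rfl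

lemma mul_xE_left (α : MIdx p m t) (u : Finset (Fin n)) (g : O p m n t F) (b : BIdx p m n t) :
    mul p m n t F (xE p m n t F α u) g b =
      if u ⊆ b.2 ∧ (∀ i, (α i : ℕ) ≤ (b.1 i : ℕ)) then
        sgn n F u (b.2 \ u) * (∏ i, ((b.1 i : ℕ).choose (α i : ℕ) : F)) * g (subM b.1 α, b.2 \ u)
      else 0 := by
  rw [mul]
  simp only [xE, Prod.mk.injEq, mul_ite, mul_one, mul_zero, ite_mul, zero_mul]
  rw [Finset.sum_eq_single α ?ha ?hb]
  case ha =>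
    intro α' _ hne
    refine Finset.sum_eq_zero fun u' _ => ?_
    split
    · rw [if_neg (fun h => hne h.1)]
    · rfl
  case hb => intro h; exact absurd (Finset.mem_univ α) h
  by_cases hu : u ⊆ b.2
  · rw [Finset.sum_eq_single u ?hc ?hd]
    case hc =>
      intro u' _ hne
      split
      · rw [if_neg (fun h => hne h.2)]
      · rfl
    case hd => intro h; exact absurd (Finset.mem_powerset.mpr hu) h
    rw [if_congr (and_iff_right hu) rfl rfl]
    split
    · rw [if_pos ⟨rfl, rfl⟩]; rfl
    · rfl
  · rw [if_neg (fun h => hu h.1)]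
    refine Finset.sum_eq_zero fun u' hu' => ?_
    split
    · rw [if_neg]
      rintro ⟨-, h2⟩
      exact hu (h2 ▸ Finset.mem_powerset.mp hu')
    · rfl

lemma mul_xE_right (β : MIdx p m t) (v : Finset (Fin n)) (f : O p m n t F) (b : BIdx p m n t) :
    mul p m n t F f (xE p m n t F β v) b =
      if v ⊆ b.2 ∧ (∀ i, (β i : ℕ) ≤ (b.1 i : ℕ)) then
        sgn n F (b.2 \ v) v * (∏ i, ((b.1 i : ℕ).choose ((b.1 i : ℕ) - (β i : ℕ)) : F)) *
          f (subM b.1 β, b.2 \ v)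
      else 0 := by
  rw [mul]
  simp only [xE, Prod.mk.injEq, funext_iff, Fin.ext_iff, mul_ite, mul_one, mul_zero]
  by_cases H : v ⊆ b.2 ∧ (∀ i, (β i : ℕ) ≤ (b.1 i : ℕ))
  · rw [Finset.sum_eq_single (subM b.1 β) ?ha ?hb]
    case ha =>
      intro α' _ hne
      refine Finset.sum_eq_zero fun u' _ => ?_
      split
      next hg =>
        rw [if_neg]
        rintro ⟨h1, -⟩
        refine hne (funext fun i => Fin.ext ?_)
        have := h1 i; have := hg i
        simp only [subM_coe]; omega
      next => rfl
    case hb => intro h; exact absurd (Finset.mem_univ _) h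
    have hguard : ∀ i : Fin (2 * m), ((subM b.1 β i : Fin (p ^ t i)) : ℕ) ≤ (b.1 i : ℕ) :=
      fun i => Nat.sub_le _ _
    rw [Finset.sum_congr rfl (fun u' _ => if_pos hguard)]
    rw [Finset.sum_eq_single (b.2 \ v) ?hc ?hd]
    case hc =>
      intro u' hu' hne
      rw [if_neg]
      rintro ⟨-, h2⟩
      exact hne (by rw [← h2, Finset.sdiff_sdiff_eq_self (Finset.mem_powerset.mp hu')])
    case hd => intro h; exact absurd (Finset.mem_powerset.mpr Finset.sdiff_subset) h
    rw [if_pos ⟨fun i => by have := H.2 i; simp only [subM_coe]; omega, Finset.sdiff_sdiff_eq_self H.1⟩]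
    rw [if_pos H, Finset.sdiff_sdiff_eq_self H.1]; rfl
  · rw [if_neg H]
    refine Finset.sum_eq_zero fun α' _ => ?_
    refine Finset.sum_eq_zero fun u' hu' => ?_
    split
    next hg =>
      rw [if_neg]
      rintro ⟨h1, h2⟩
      exact H ⟨h2 ▸ Finset.sdiff_subset, fun i => by have := h1 i; have := hg i; omega⟩
    next => rfl

lemma mul_xE_xE (α β : MIdx p m t) (u v : Finset (Fin n)) (b : BIdx p m n t) :
    mul p m n t F (xE p m n t F α u) (xE p m n t F β v) b =
      if b.2 = u ∪ v ∧ Disjoint u v ∧ (∀ i, (b.1 i : ℕ) = (α i : ℕ) + (β i : ℕ)) then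
        sgn n F u v * ∏ i, ((b.1 i : ℕ).choose (α i : ℕ) : F)
      else 0 := by
  rw [mul_xE_left]
  by_cases H : b.2 = u ∪ v ∧ Disjoint u v ∧ (∀ i, (b.1 i : ℕ) = (α i : ℕ) + (β i : ℕ))
  · obtain ⟨h2, hd, h1⟩ := H
    have husub : u ⊆ b.2 := h2 ▸ Finset.subset_union_left
    have hsd : b.2 \ u = v := by rw [h2, Finset.union_sdiff_cancel_left hd]
    rw [if_pos ⟨husub, fun i => by have := h1 i; omega⟩]
    rw [if_pos ⟨h2, hd, h1⟩]
    have hx : xE p m n t F β v (subM b.1 α, b.2 \ u) = 1 := by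
      rw [xE, if_pos]
      exact Prod.ext (funext fun i => Fin.ext (by have := h1 i; simp only [subM_coe]; omega)) hsd
    rw [hx, hsd, mul_one]
  · rw [if_neg H]
    split
    next hg =>
      have hx : xE p m n t F β v (subM b.1 α, b.2 \ u) = 0 := by
        rw [xE, if_neg]
        intro h
        have h1 : ∀ i, (b.1 i : ℕ) - (α i : ℕ) = (β i : ℕ) := fun i => by
          have := congrFun (congrArg Prod.fst h) i
          exact congrArg Fin.val this
        have h2 : b.2 \ u = v := congrArg Prod.snd h
        refine H ⟨?_, ?_, fun i => by have := h1 i; have := hg.2 i; omega⟩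
        · rw [← h2, Finset.union_sdiff_of_subset hg.1]
        · rw [← h2]; exact Finset.disjoint_sdiff
      rw [hx, mul_zero]
    next => rfl

end Basis
section Basis2
variable {p m n : ℕ} {t : Fin (2 * m) → ℕ} {F : Type} [Field F]

/-- The zero multi-index. -/
def zeroM (hp : 0 < p) : MIdx p m t := fun i => ⟨0, pow_pos hp _⟩

@[simp] lemma zeroM_coe (hp : 0 < p) (i : Fin (2 * m)) :
    ((zeroM (t := t) hp i : Fin (p ^ t i)) : ℕ) = 0 := rfl

/-- The multi-index `ε_s`. -/
def oneM (h4 : ∀ i, 3 < p ^ t i) (s : Fin (2 * m)) : MIdx p m t :=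
  fun i => ⟨if i = s then 1 else 0, by have := h4 i; split <;> omega⟩

@[simp] lemma oneM_coe (h4 : ∀ i, 3 < p ^ t i) (s i : Fin (2 * m)) :
    ((oneM (t := t) h4 s i : Fin (p ^ t i)) : ℕ) = if i = s then 1 else 0 := rfl

/-- The multi-index `2 ε_s`. -/
def twoM (h4 : ∀ i, 3 < p ^ t i) (s : Fin (2 * m)) : MIdx p m t :=
  fun i => ⟨if i = s then 2 else 0, by have := h4 i; split <;> omega⟩

@[simp] lemma twoM_coe (h4 : ∀ i, 3 < p ^ t i) (s i : Fin (2 * m)) :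
    ((twoM (t := t) h4 s i : Fin (p ^ t i)) : ℕ) = if i = s then 2 else 0 := rfl

/-- Decrement of a multi-index at `i`. -/
def decM (α : MIdx p m t) (i : Fin (2 * m)) : MIdx p m t :=
  fun j => ⟨(α j : ℕ) - (if j = i then 1 else 0), lt_of_le_of_lt (Nat.sub_le _ _) (α j).isLt⟩

@[simp] lemma decM_coe (α : MIdx p m t) (i j : Fin (2 * m)) :
    ((decM α i j : Fin (p ^ t j)) : ℕ) = (α j : ℕ) - (if j = i then 1 else 0) := rfl

lemma pdE_xE (i : Fin (2 * m)) (α : MIdx p m t) (u : Finset (Fin n)) :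
    pdE p m n t F i (xE p m n t F α u) =
      if 1 ≤ (α i : ℕ) then xE p m n t F (decM α i) u else 0 := by
  funext b
  rw [pdE]
  split
  next h =>
    have hcond : ((Function.update b.1 i (⟨(b.1 i : ℕ) + 1, h⟩ : Fin (p ^ t i)), b.2)
        = ((α, u) : BIdx p m n t)) ↔ (1 ≤ (α i : ℕ) ∧ b = ((decM α i, u) : BIdx p m n t)) := by
      constructor
      · intro he
        have hf : Function.update b.1 i (⟨(b.1 i : ℕ) + 1, h⟩ : Fin (p ^ t i)) = α :=
          congrArg Prod.fst he
        have hs : b.2 = u := congrArg Prod.snd he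
        have hii : (α i : ℕ) = (b.1 i : ℕ) + 1 := by
          rw [← hf, Function.update_self]
        refine ⟨by omega, Prod.ext (funext fun j => Fin.ext ?_) hs⟩
        simp only [decM_coe]
        by_cases hj : j = i
        · subst hj; simp; omega
        · have hjj : (α j : ℕ) = (b.1 j : ℕ) := by
            rw [← hf, Function.update_of_ne hj]
          simp only [if_neg hj]; omega
      · rintro ⟨hα, he⟩
        have hf : b.1 = decM α i := congrArg Prod.fst he
        have hs : b.2 = u := congrArg Prod.snd he
        refine Prod.ext (funext fun j => Fin.ext ?_) hs
        dsimp only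
        by_cases hj : j = i
        · subst hj
          rw [Function.update_self]
          have hji : (b.1 j : ℕ) = (α j : ℕ) - 1 := by
            rw [hf]; simp
          show (b.1 j : ℕ) + 1 = (α j : ℕ)
          omega
        · rw [Function.update_of_ne hj]
          have hji : (b.1 j : ℕ) = (α j : ℕ) := by
            rw [hf]; simp only [decM_coe, if_neg hj]; omega
          exact hji
    by_cases hα : 1 ≤ (α i : ℕ)
    · rw [if_pos hα, xE, xE]
      refine if_congr ?_ rfl rfl
      rw [hcond]
      exact ⟨fun h' => h'.2, fun h' => ⟨hα, h'⟩⟩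
    · rw [if_neg hα, xE, if_neg, Pi.zero_apply]
      intro he
      exact hα (hcond.mp he).1
  next h =>
    by_cases hα : 1 ≤ (α i : ℕ)
    · rw [if_pos hα, xE, if_neg]
      intro he
      have hf : b.1 = decM α i := congrArg Prod.fst he
      have h1 : (b.1 i : ℕ) = (α i : ℕ) - 1 := by
        rw [hf]; simp
      have h2 := (α i).isLt
      have h3 := (b.1 i).isLt
      omega
    · rw [if_neg hα]; rfl

lemma pdO_xE (k : Fin n) (α : MIdx p m t) (u : Finset (Fin n)) :
    pdO p m n t F k (xE p m n t F α u) =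
      if k ∈ u then
        ((-1 : F) ^ ((u.erase k).filter (· < k)).card) • xE p m n t F α (u.erase k)
      else 0 := by
  funext b
  rw [pdO]
  by_cases hk : k ∈ u
  · rw [if_pos hk]
    by_cases hb : k ∈ b.2
    · rw [if_pos hb, Pi.smul_apply, xE, if_neg, smul_zero]
      intro he
      have h2 : b.2 = u.erase k := congrArg Prod.snd he
      exact (Finset.notMem_erase k u) (h2 ▸ hb)
    · rw [if_neg hb, Pi.smul_apply, smul_eq_mul, xE, xE]
      by_cases hc : b = ((α, u.erase k) : BIdx p m n t)
      · have h1 : b.1 = α := congrArg Prod.fst hc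
        have h2 : b.2 = u.erase k := congrArg Prod.snd hc
        have key : ((b.1, insert k b.2) : BIdx p m n t) = (α, u) :=
          Prod.ext h1 (by rw [h2]; exact Finset.insert_erase hk)
        rw [if_pos hc, if_pos key, h2]
      · rw [if_neg hc, if_neg, mul_zero, mul_zero]
        intro he
        have h1 : b.1 = α := congrArg Prod.fst he
        have h2 : insert k b.2 = u := congrArg Prod.snd he
        exact hc (Prod.ext h1 (by rw [← h2, Finset.erase_insert hb]))
  · rw [if_neg hk]
    by_cases hb : k ∈ b.2
    · rw [if_pos hb]; rfl
    · rw [if_neg hb, xE, if_neg, mul_zero, Pi.zero_apply]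
      intro he
      have h2 : insert k b.2 = u := congrArg Prod.snd he
      exact hk (h2 ▸ Finset.mem_insert_self k b.2)

lemma evenO_xE_of_even (α : MIdx p m t) (u : Finset (Fin n)) (hu : u.card % 2 = 0) :
    evenO p m n t F (xE p m n t F α u) = xE p m n t F α u := by
  funext b
  rw [evenO]
  split
  · rfl
  next h =>
    rw [xE, if_neg]
    intro he
    have h2 : b.2 = u := congrArg Prod.snd he
    exact h (by rw [h2]; exact hu)

lemma oddO_xE_of_even (α : MIdx p m t) (u : Finset (Fin n)) (hu : u.card % 2 = 0) :
    oddO p m n t F (xE p m n t F α u) = 0 := by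
  funext b
  rw [oddO]
  split
  next h =>
    rw [xE, if_neg, Pi.zero_apply]
    intro he
    have h2 : b.2 = u := congrArg Prod.snd he
    rw [h2] at h
    omega
  next => rfl

lemma evenO_xE_of_odd (α : MIdx p m t) (u : Finset (Fin n)) (hu : u.card % 2 = 1) :
    evenO p m n t F (xE p m n t F α u) = 0 := by
  funext b
  rw [evenO]
  split
  next h =>
    rw [xE, if_neg, Pi.zero_apply]
    intro he
    have h2 : b.2 = u := congrArg Prod.snd he
    rw [h2] at h
    omega
  next => rfl

lemma sgn_empty_right (u : Finset (Fin n)) : sgn n F u ∅ = 1 := by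
  rw [sgn]; simp

lemma sgn_empty_left (v : Finset (Fin n)) : sgn n F ∅ v = 1 := by
  rw [sgn]; simp

lemma sgn_ne_zero (u v : Finset (Fin n)) : sgn n F u v ≠ 0 :=
  pow_ne_zero _ (neg_ne_zero.mpr one_ne_zero)

lemma sgn_singleton_left (a : Fin n) (v : Finset (Fin n)) :
    sgn n F {a} v = (-1 : F) ^ (v.filter (· < a)).card := by
  rw [sgn, Finset.singleton_product, Finset.filter_map, Finset.card_map]
  rfl

lemma neg_one_pow_ne_zero (e : ℕ) : ((-1 : F) ^ e) ≠ 0 :=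
  pow_ne_zero _ (neg_ne_zero.mpr one_ne_zero)

lemma mul_oneO_left (hp : 0 < p) (g : O p m n t F) :
    mul p m n t F (xE p m n t F (zeroM hp) ∅) g = g := by
  funext b
  rw [mul_xE_left, if_pos ⟨Finset.empty_subset _, fun i => by simp⟩, sgn_empty_left]
  have h2 : (∏ i, (((b.1 i : ℕ).choose ((zeroM (t := t) hp i : Fin (p ^ t i)) : ℕ)) : F)) = 1 := by
    simp
  rw [h2]
  have h3 : ((subM b.1 (zeroM hp), b.2 \ ∅) : BIdx p m n t) = b := by
    refine Prod.ext (funext fun i => Fin.ext ?_) (by simp)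
    simp
  rw [h3]; ring

lemma mul_oneO_right (hp : 0 < p) (f : O p m n t F) :
    mul p m n t F f (xE p m n t F (zeroM hp) ∅) = f := by
  funext b
  rw [mul_xE_right, if_pos ⟨Finset.empty_subset _, fun i => by simp⟩, sgn_empty_right]
  have h2 : (∏ i, (((b.1 i : ℕ).choose ((b.1 i : ℕ) - ((zeroM (t := t) hp i : Fin (p ^ t i)) : ℕ))) : F)) = 1 := by
    simp
  rw [h2]
  have h3 : ((subM b.1 (zeroM hp), b.2 \ ∅) : BIdx p m n t) = b := by
    refine Prod.ext (funext fun i => Fin.ext ?_) (by simp)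
    simp
  rw [h3]; ring

lemma primeE_primeE (j : Fin (2 * m)) : primeE m (primeE m j) = j := by
  have hj := j.isLt
  refine Fin.ext ?_
  unfold primeE
  split
  next h =>
    split
    next h2 => simp only [] at h2 ⊢; omega
    next h2 => simp only [] at h2 ⊢; omega
  next h =>
    split
    next h2 => simp only [] at h2 ⊢; omega
    next h2 => simp only [] at h2 ⊢; omega

lemma tauF_ne_zero (i : Fin (2 * m)) : tauF m F i ≠ 0 := by
  rw [tauF]; split
  · exact one_ne_zero
  · exact neg_ne_zero.mpr one_ne_zero

lemma DH_inl (a : O p m n t F) (j : Fin (2 * m)) :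
    DH p m n t F a (Sum.inl j) = tauF m F (primeE m j) • pdE p m n t F (primeE m j) a := by
  show tauF m F (primeE m j) •
      (pdE p m n t F (primeE m j) (evenO p m n t F a) + pdE p m n t F (primeE m j) (oddO p m n t F a)) = _
  rw [← pdE_add, evenO_add_oddO]

lemma DH_xE_inr (α : MIdx p m t) (u : Finset (Fin n)) (hu : u.card % 2 = 0) (k : Fin n) :
    DH p m n t F (xE p m n t F α u) (Sum.inr k) = pdO p m n t F k (xE p m n t F α u) := by
  show pdO p m n t F k (evenO p m n t F (xE p m n t F α u))
      - pdO p m n t F k (oddO p m n t F (xE p m n t F α u)) = _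
  rw [evenO_xE_of_even _ _ hu, oddO_xE_of_even _ _ hu, pdO_zero, sub_zero]

end Basis2
section Omega
variable {p m n : ℕ} {t : Fin (2 * m) → ℕ} {F : Type} [Field F]

lemma neg_one_pow_eq (a b : ℕ) (h : a % 2 = b % 2) : ((-1 : F)) ^ a = (-1) ^ b := by
  rcases Nat.even_or_odd a with ha | ha
  · rw [Even.neg_one_pow ha, Even.neg_one_pow (by rw [Nat.even_iff, ← h, ← Nat.even_iff]; exact ha)]
  · rw [Odd.neg_one_pow ha, Odd.neg_one_pow (by rw [Nat.odd_iff, ← h, ← Nat.odd_iff]; exact ha)]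

lemma card_split (k0 k : Fin n) (h : k0 ≠ k) :
    ((Finset.univ.erase k).filter (· < k)).card
      = (((Finset.univ.erase k0).erase k).filter (· < k)).card
        + (({k0} : Finset (Fin n)).filter (· < k)).card := by
  have h1 : ((Finset.univ.erase k0).erase k : Finset (Fin n)) = (Finset.univ.erase k).erase k0 :=
    Finset.erase_right_comm
  have h2 : (((Finset.univ.erase k).erase k0).filter (· < k))
      = ((Finset.univ.erase k).filter (· < k)).erase k0 := by
    ext x; simp only [Finset.mem_erase, Finset.mem_filter]; tauto
  rw [h1, h2, Finset.filter_singleton]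
  by_cases hlt : k0 < k
  · have hmem : k0 ∈ (Finset.univ.erase k).filter (· < k) := by
      simp only [Finset.mem_filter, Finset.mem_erase]
      exact ⟨⟨h, Finset.mem_univ _⟩, hlt⟩
    rw [Finset.card_erase_of_mem hmem, if_pos hlt, Finset.card_singleton]
    have := Finset.card_pos.mpr ⟨k0, hmem⟩
    omega
  · have hmem : k0 ∉ (Finset.univ.erase k).filter (· < k) := by
      simp only [Finset.mem_filter, Finset.mem_erase]; tauto
    rw [Finset.erase_eq_of_notMem hmem, if_neg hlt, Finset.card_empty]
    omega

lemma xOmega_eq (hp : 0 < p) :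
    xOmega p m n t F = xE p m n t F (zeroM hp) Finset.univ := by
  funext b
  rw [xOmega, xE]
  refine if_congr ?_ rfl rfl
  constructor
  · rintro ⟨h1, h2⟩
    exact Prod.ext (funext fun i => Fin.ext (by simp [h1 i])) h2
  · intro he
    have hf : b.1 = zeroM hp := congrArg Prod.fst he
    have hs : b.2 = Finset.univ := congrArg Prod.snd he
    exact ⟨fun i => by rw [hf]; simp, hs⟩

lemma DH_omega_inl (hp : 0 < p) (j : Fin (2 * m)) :
    DH p m n t F (xE p m n t F (zeroM hp) Finset.univ) (Sum.inl j) = 0 := by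
  rw [DH_inl, pdE_xE, if_neg (by simp), smul_zero]

lemma DH_omega_inr (hp : 0 < p) (hne : Even n) (k : Fin n) :
    DH p m n t F (xE p m n t F (zeroM hp) Finset.univ) (Sum.inr k)
      = ((-1 : F) ^ ((Finset.univ.erase k).filter (· < k)).card) •
          xE p m n t F (zeroM hp) (Finset.univ.erase k) := by
  rw [DH_xE_inr _ _ (by rw [Finset.card_univ, Fintype.card_fin]; exact Nat.even_iff.mp hne),
    pdO_xE, if_pos (Finset.mem_univ k)]

lemma oddW_DH_omega (hp : 0 < p) (hne : Even n) :
    oddW p m n t F (DH p m n t F (xE p m n t F (zeroM hp) Finset.univ)) = 0 := by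
  funext i
  match i with
  | Sum.inl j =>
    show oddO p m n t F (DH p m n t F _ (Sum.inl j)) = 0
    rw [DH_omega_inl hp, oddO_zero]
  | Sum.inr k =>
    show evenO p m n t F (DH p m n t F _ (Sum.inr k)) = 0
    rw [DH_omega_inr hp hne, evenO_smul, evenO_xE_of_odd, smul_zero]
    have hk := k.isLt
    rw [Finset.card_erase_of_mem (Finset.mem_univ k), Finset.card_univ, Fintype.card_fin]
    rw [Nat.even_iff] at hne
    omega

lemma singleton_of_erase_empty {u : Finset (Fin n)} {k : Fin n} (hk : k ∈ u)
    (h : u.erase k = ∅) : u = {k} := by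
  rw [← Finset.insert_erase hk, h]; rfl

/-- The union identity `{k0} ∪ (univ \ {k0,k}) = univ \ {k}`. -/
lemma union_univ_erase (k0 k : Fin n) (h : k0 ≠ k) :
    ({k0} : Finset (Fin n)) ∪ ((Finset.univ.erase k0).erase k) = Finset.univ.erase k := by
  ext a
  simp only [Finset.mem_union, Finset.mem_singleton, Finset.mem_erase, Finset.mem_univ,
    and_true]
  constructor
  · rintro (rfl | ⟨h1, h2⟩)
    · exact h
    · exact h1
  · intro ha
    by_cases hak : a = k0
    · exact Or.inl hak
    · exact Or.inr ⟨ha, hak⟩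

lemma pair_erase_left {k0 k : Fin n} (h : k0 ≠ k) :
    ({k0, k} : Finset (Fin n)).erase k0 = {k} :=
  Finset.erase_insert (by simp [h])

lemma pair_erase_right {k0 k : Fin n} (h : k0 ≠ k) :
    ({k0, k} : Finset (Fin n)).erase k = {k0} := by
  rw [Finset.pair_comm]
  exact Finset.erase_insert (by simp only [Finset.mem_singleton]; exact fun hh => h hh.symm)

end Omega
section BraOmegaTerm
variable {p m n : ℕ} {t : Fin (2 * m) → ℕ} {F : Type} [Field F]

lemma braOmega_term (hp : 0 < p) (α : MIdx p m t) (u : Finset (Fin n))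
    (hu : u.card % 2 = 0) (k0 k : Fin n) (b : BIdx p m n t) :
    mul p m n t F
        (((-1 : F) ^ ((Finset.univ.erase k).filter (· < k)).card) •
          xE p m n t F (zeroM hp) (Finset.univ.erase k))
        (pdO p m n t F k (pdO p m n t F k0 (xE p m n t F α u))) b
      = ((-1 : F) ^ ((Finset.univ.erase k0).filter (· < k0)).card) *
          mul p m n t F (pdO p m n t F k (xE p m n t F α u))
            (pdO p m n t F k (xE p m n t F (zeroM hp) (Finset.univ.erase k0))) b := by
  by_cases hk0 : k0 ∈ u
  · rw [pdO_xE k0, if_pos hk0, pdO_smul, pdO_xE k]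
    by_cases hk : k ∈ u.erase k0
    · have hkk0 : k ≠ k0 := (Finset.mem_erase.mp hk).1
      have hku : k ∈ u := (Finset.mem_erase.mp hk).2
      rw [if_pos hk]
      rw [mul_smul_left, mul_smul_right, mul_smul_right]
      rw [pdO_xE k α u, if_pos hku,
        pdO_xE k (zeroM hp) (Finset.univ.erase k0),
        if_pos (Finset.mem_erase.mpr ⟨hkk0, Finset.mem_univ k⟩),
        mul_smul_left, mul_smul_right]
      simp only [Pi.smul_apply, smul_eq_mul]
      rw [mul_xE_xE, mul_xE_xE]
      have CLimp : (b.2 = Finset.univ.erase k ∪ (u.erase k0).erase k ∧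
            Disjoint (Finset.univ.erase k) ((u.erase k0).erase k) ∧
            (∀ i, (b.1 i : ℕ) = ((zeroM (t := t) hp i : Fin (p ^ t i)) : ℕ) + (α i : ℕ))) →
          (u = {k0, k} ∧ b.2 = Finset.univ.erase k ∧ ∀ i, (b.1 i : ℕ) = (α i : ℕ)) := by
        rintro ⟨hb2, hdisj, hb1⟩
        have hW1 : (u.erase k0).erase k = ∅ := by
          rw [Finset.eq_empty_iff_forall_notMem]
          intro l hl
          exact (Finset.disjoint_right.mp hdisj hl)
            (Finset.mem_erase.mpr ⟨(Finset.mem_erase.mp hl).1, Finset.mem_univ l⟩)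
        have h1 : u.erase k0 = {k} := singleton_of_erase_empty hk hW1
        have hu2 : u = {k0, k} := by rw [← Finset.insert_erase hk0, h1]
        exact ⟨hu2, by rw [hb2, hW1, Finset.union_empty],
          fun i => by have := hb1 i; simpa using this⟩
      have CRimp : (b.2 = u.erase k ∪ (Finset.univ.erase k0).erase k ∧
            Disjoint (u.erase k) ((Finset.univ.erase k0).erase k) ∧
            (∀ i, (b.1 i : ℕ) = (α i : ℕ) + ((zeroM (t := t) hp i : Fin (p ^ t i)) : ℕ))) →
          (u = {k0, k} ∧ b.2 = Finset.univ.erase k ∧ ∀ i, (b.1 i : ℕ) = (α i : ℕ)) := by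
        rintro ⟨hb2, hdisj, hb1⟩
        have h2 : u.erase k = {k0} := by
          apply Finset.eq_singleton_iff_unique_mem.mpr
          refine ⟨Finset.mem_erase.mpr ⟨Ne.symm hkk0, hk0⟩, ?_⟩
          intro l hl
          by_contra hlk0
          exact (Finset.disjoint_left.mp hdisj hl)
            (Finset.mem_erase.mpr ⟨(Finset.mem_erase.mp hl).1,
              Finset.mem_erase.mpr ⟨hlk0, Finset.mem_univ l⟩⟩)
        have hu2 : u = {k0, k} := by
          rw [← Finset.insert_erase hku, h2]
          exact Finset.pair_comm k k0
        exact ⟨hu2, by rw [hb2, h2, union_univ_erase k0 k (Ne.symm hkk0)],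
          fun i => by have := hb1 i; simpa using this⟩
      by_cases hC : u = {k0, k} ∧ b.2 = Finset.univ.erase k ∧ ∀ i, (b.1 i : ℕ) = (α i : ℕ)
      · obtain ⟨hu2, hb2, hb1⟩ := hC
        have h1 : u.erase k0 = {k} := by rw [hu2]; exact pair_erase_left hkk0.symm
        have h2 : u.erase k = {k0} := by rw [hu2]; exact pair_erase_right hkk0.symm
        have hW1 : (u.erase k0).erase k = ∅ := by rw [h1]; exact Finset.erase_singleton k
        rw [if_pos ⟨by rw [hW1, Finset.union_empty, hb2], by rw [hW1]; exact Finset.disjoint_empty_right _,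
          fun i => by simpa using hb1 i⟩]
        rw [if_pos ⟨by rw [h2, union_univ_erase k0 k (Ne.symm hkk0), hb2], by
            rw [h2]
            refine Finset.disjoint_singleton_left.mpr ?_
            intro hmem
            exact Finset.notMem_erase k0 Finset.univ (Finset.mem_erase.mp hmem).2,
          fun i => by simpa using hb1 i⟩]
        have hprod0 : (∏ i, (((b.1 i : ℕ).choose ((zeroM (t := t) hp i : Fin (p ^ t i)) : ℕ)) : F)) = 1 := by
          simp
        have hprodα : (∏ i, (((b.1 i : ℕ).choose ((α i : ℕ))) : F)) = 1 := by
          refine Finset.prod_eq_one fun i _ => ?_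
          rw [hb1 i, Nat.choose_self, Nat.cast_one]
        rw [hprod0, hprodα, hW1, h1, h2, sgn_empty_right, sgn_singleton_left]
        simp only [Finset.filter_empty, Finset.card_empty, pow_zero, one_mul, mul_one]
        simp only [← pow_add]
        apply neg_one_pow_eq
        have hEk := card_split k0 k (Ne.symm hkk0)
        have hEk0' := card_split k k0 hkk0
        rw [show ((Finset.univ.erase k).erase k0 : Finset (Fin n))
            = (Finset.univ.erase k0).erase k from Finset.erase_right_comm] at hEk0'
        omega
      · rw [if_neg (fun h => hC (CLimp h)), if_neg (fun h => hC (CRimp h))]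
        ring
    · rw [if_neg hk, smul_zero, mul_zero_right]
      rw [pdO_xE k α u]
      by_cases hku : k ∈ u
      · have hkk0 : k = k0 := by
          by_contra hne'
          exact hk (Finset.mem_erase.mpr ⟨hne', hku⟩)
        subst hkk0
        rw [if_pos hku, pdO_xE k (zeroM hp) (Finset.univ.erase k),
          if_neg (Finset.notMem_erase k Finset.univ), mul_zero_right]
        simp
      · rw [if_neg hku, mul_zero_left]
        simp
  · rw [pdO_xE k0, if_neg hk0, pdO_zero, mul_zero_right]
    rw [pdO_xE k α u]
    by_cases hku : k ∈ u
    · have hkk0 : k ≠ k0 := fun h => hk0 (h ▸ hku)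
      rw [if_pos hku, pdO_xE k (zeroM hp) (Finset.univ.erase k0),
        if_pos (Finset.mem_erase.mpr ⟨hkk0, Finset.mem_univ k⟩),
        mul_smul_left, mul_smul_right]
      simp only [Pi.smul_apply, smul_eq_mul, Pi.zero_apply]
      rw [mul_xE_xE, if_neg]
      · ring
      rintro ⟨-, hdisj, -⟩
      have hemp : u.erase k = ∅ := by
        rw [Finset.eq_empty_iff_forall_notMem]
        intro l hl
        have hlu : l ∈ u := (Finset.mem_erase.mp hl).2
        have hlk0 : l ≠ k0 := fun h => hk0 (h ▸ hlu)
        exact (Finset.disjoint_left.mp hdisj hl)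
          (Finset.mem_erase.mpr ⟨(Finset.mem_erase.mp hl).1,
            Finset.mem_erase.mpr ⟨hlk0, Finset.mem_univ l⟩⟩)
      rw [singleton_of_erase_empty hku hemp, Finset.card_singleton] at hu
      omega
    · rw [if_neg hku, mul_zero_left]
      simp
end BraOmegaTerm
section BraOmega
variable {p m n : ℕ} {t : Fin (2 * m) → ℕ} {F : Type} [Field F]

lemma braOmega (hp : 0 < p) (hne : Even n) (α : MIdx p m t) (u : Finset (Fin n))
    (hu : u.card % 2 = 0) :
    bra p m n t F (DH p m n t F (xE p m n t F (zeroM hp) Finset.univ))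
      (DH p m n t F (xE p m n t F α u)) = 0 := by
  have hDo : oddW p m n t F (DH p m n t F (xE p m n t F (zeroM hp) Finset.univ)) = 0 :=
    oddW_DH_omega hp hne
  funext j b
  suffices hgoal : (act p m n t F (DH p m n t F (xE p m n t F (zeroM hp) Finset.univ))
        (DH p m n t F (xE p m n t F α u) j)
      - act p m n t F (DH p m n t F (xE p m n t F α u))
          (DH p m n t F (xE p m n t F (zeroM hp) Finset.univ) j)
      + act p m n t F (oddW p m n t F (DH p m n t F (xE p m n t F α u)))
          (oddW p m n t F (DH p m n t F (xE p m n t F (zeroM hp) Finset.univ)) j)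
      + act p m n t F (oddW p m n t F (DH p m n t F (xE p m n t F α u)))
          (oddW p m n t F (DH p m n t F (xE p m n t F (zeroM hp) Finset.univ)) j)) b = 0 by
    exact hgoal.trans rfl
  have h0 : oddW p m n t F (DH p m n t F (xE p m n t F (zeroM hp) Finset.univ)) j = 0 := by
    rw [hDo]; rfl
  rw [h0, act_zero_right]
  match j with
  | Sum.inl j0 =>
    rw [DH_omega_inl hp j0, act_zero_right, DH_inl, act_smul_right]
    suffices hAct : act p m n t F (DH p m n t F (xE p m n t F (zeroM hp) Finset.univ))
        (pdE p m n t F (primeE m j0) (xE p m n t F α u)) = 0 by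
      rw [hAct]; simp
    rw [pdE_xE]
    split
    case isFalse => exact act_zero_right _
    case isTrue hα =>
      funext b'
      rw [act_split]
      have hL : ∀ j' : Fin (2 * m),
          mul p m n t F (DH p m n t F (xE p m n t F (zeroM hp) Finset.univ) (Sum.inl j'))
            (pdE p m n t F j' (xE p m n t F (decM α (primeE m j0)) u)) b' = 0 := fun j' => by
        rw [DH_omega_inl hp, mul_zero_left]; rfl
      have hR : ∀ k : Fin n,
          mul p m n t F (DH p m n t F (xE p m n t F (zeroM hp) Finset.univ) (Sum.inr k))
            (pdO p m n t F k (xE p m n t F (decM α (primeE m j0)) u)) b' = 0 := fun k => by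
        rw [DH_omega_inr hp hne, pdO_xE, mul_smul_left]
        split
        next hk =>
          rw [mul_smul_right]
          simp only [Pi.smul_apply, smul_eq_mul]
          rw [mul_xE_xE, if_neg]
          · ring
          rintro ⟨-, hdisj, -⟩
          have hemp : u.erase k = ∅ := by
            rw [Finset.eq_empty_iff_forall_notMem]
            intro l hl
            exact (Finset.disjoint_right.mp hdisj hl)
              (Finset.mem_erase.mpr ⟨(Finset.mem_erase.mp hl).1, Finset.mem_univ l⟩)
          rw [singleton_of_erase_empty hk hemp, Finset.card_singleton] at hu
          omega
        next => rw [mul_zero_right]; simp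
      rw [Finset.sum_eq_zero (fun j' _ => hL j'), Finset.sum_eq_zero (fun k _ => hR k)]
      simp
  | Sum.inr k0 =>
    simp only [Pi.add_apply, Pi.sub_apply, Pi.zero_apply, add_zero]
    rw [sub_eq_zero, DH_xE_inr α u hu k0, DH_omega_inr hp hne k0, act_smul_right]
    simp only [Pi.smul_apply, smul_eq_mul]
    rw [act_split, act_split]
    have hz1 : ∀ j' ∈ (Finset.univ : Finset (Fin (2 * m))),
        mul p m n t F (DH p m n t F (xE p m n t F (zeroM hp) Finset.univ) (Sum.inl j'))
          (pdE p m n t F j' (pdO p m n t F k0 (xE p m n t F α u))) b = 0 := fun j' _ => by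
      rw [DH_omega_inl hp, mul_zero_left]; rfl
    have hz2 : ∀ j' ∈ (Finset.univ : Finset (Fin (2 * m))),
        mul p m n t F (DH p m n t F (xE p m n t F α u) (Sum.inl j'))
          (pdE p m n t F j' (xE p m n t F (zeroM hp) (Finset.univ.erase k0))) b = 0 :=
      fun j' _ => by rw [pdE_xE, if_neg (by simp), mul_zero_right]; rfl
    rw [Finset.sum_eq_zero hz1, Finset.sum_eq_zero hz2, zero_add, zero_add, Finset.mul_sum]
    refine Finset.sum_congr rfl fun k _ => ?_
    rw [show DH p m n t F (xE p m n t F α u) (Sum.inr k)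
        = pdO p m n t F k (xE p m n t F α u) from DH_xE_inr α u hu k,
      show DH p m n t F (xE p m n t F (zeroM hp) Finset.univ) (Sum.inr k)
        = ((-1 : F) ^ ((Finset.univ.erase k).filter (· < k)).card) •
            xE p m n t F (zeroM hp) (Finset.univ.erase k) from DH_omega_inr hp hne k]
    exact braOmega_term hp α u hu k0 k b

end BraOmega
section Forward
variable {p m n : ℕ} {t : Fin (2 * m) → ℕ} {F : Type} [Field F]

lemma oddW_DH_xE_even (α : MIdx p m t) (u : Finset (Fin n)) (hu : u.card % 2 = 0) :
    oddW p m n t F (DH p m n t F (xE p m n t F α u)) = 0 := by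
  funext i
  match i with
  | Sum.inl j =>
    show oddO p m n t F (DH p m n t F (xE p m n t F α u) (Sum.inl j)) = 0
    rw [DH_inl, oddO_smul, pdE_xE]
    split
    · rw [oddO_xE_of_even _ _ hu, smul_zero]
    · rw [oddO_zero, smul_zero]
  | Sum.inr k =>
    show evenO p m n t F (DH p m n t F (xE p m n t F α u) (Sum.inr k)) = 0
    rw [DH_xE_inr _ _ hu, pdO_xE]
    split
    next hk =>
      rw [evenO_smul, evenO_xE_of_odd, smul_zero]
      rw [Finset.card_erase_of_mem hk]
      have := Finset.card_pos.mpr ⟨k, hk⟩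
      omega
    next => exact evenO_zero

lemma notPi_oneM (hb : ∀ i, 3 < p ^ t i) (s : Fin (2 * m)) :
    ¬ isPi p m t (oneM hb s) := fun h => by
  have h1 := h s
  rw [oneM_coe, if_pos rfl] at h1
  have := hb s
  omega

lemma notPi_twoM (hb : ∀ i, 3 < p ^ t i) (s : Fin (2 * m)) :
    ¬ isPi p m t (twoM hb s) := fun h => by
  have h1 := h s
  rw [twoM_coe, if_pos rfl] at h1
  have := hb s
  omega

lemma mem_frakN_of_notPi (α : MIdx p m t) (u : Finset (Fin n)) (hu : Even u.card)
    (hni : ¬ isPi p m t α) :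
    DH p m n t F (xE p m n t F α u) ∈ frakN p m n t F :=
  Submodule.subset_span ⟨α, u, hu, fun h => hni h.1, fun h => hni h.1, rfl⟩

lemma central_eq {D : W p m n t F}
    (hc : ∀ X ∈ frakN p m n t F, bra p m n t F D X = 0)
    {X : W p m n t F} (hmem : X ∈ frakN p m n t F) (hoX : oddW p m n t F X = 0)
    (j : Y m n) (b : BIdx p m n t) :
    act p m n t F D (X j) b = act p m n t F X (D j) b := by
  have h := hc X hmem
  have h' : (act p m n t F D (X j) - act p m n t F X (D j)
      + act p m n t F (oddW p m n t F X) (oddW p m n t F D j)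
      + act p m n t F (oddW p m n t F X) (oddW p m n t F D j)) b = 0 := by
    rw [show (act p m n t F D (X j) - act p m n t F X (D j)
      + act p m n t F (oddW p m n t F X) (oddW p m n t F D j)
      + act p m n t F (oddW p m n t F X) (oddW p m n t F D j)) = bra p m n t F D X j from rfl,
      h]
    rfl
  rw [hoX, act_zero_left] at h'
  simp only [Pi.add_apply, Pi.sub_apply, Pi.zero_apply, add_zero] at h'
  exact sub_eq_zero.mp h'

lemma decM_oneM (hb : ∀ i, 3 < p ^ t i) (hp : 0 < p) (s : Fin (2 * m)) :
    decM (oneM hb s) s = zeroM (t := t) hp := by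
  funext j
  apply Fin.ext
  by_cases hj : j = s <;> simp [hj]

lemma decM_twoM (hb : ∀ i, 3 < p ^ t i) (s : Fin (2 * m)) :
    decM (twoM hb s) s = oneM (t := t) hb s := by
  funext j
  apply Fin.ext
  by_cases hj : j = s <;> simp [hj]

/-- `act D (x^(0) x^∅) = 0` for any `D`. -/
lemma act_one_zero (hp : 0 < p) (D : W p m n t F) :
    act p m n t F D (xE p m n t F (zeroM hp) ∅) = 0 := by
  funext b
  rw [act_apply]
  refine Finset.sum_eq_zero fun i _ => ?_
  have hpd : pd p m n t F i (xE p m n t F (zeroM hp) ∅) = 0 := by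
    cases i with
    | inl i' =>
      show pdE p m n t F i' (xE p m n t F (zeroM hp) ∅) = 0
      rw [pdE_xE, if_neg (by simp)]
    | inr k =>
      show pdO p m n t F k (xE p m n t F (zeroM hp) ∅) = 0
      rw [pdO_xE, if_neg (Finset.notMem_empty k)]
  rw [hpd, mul_zero_right]
  rfl

lemma step1 {D : W p m n t F} (hb : ∀ i, 3 < p ^ t i) (hp : 0 < p)
    (hc : ∀ X ∈ frakN p m n t F, bra p m n t F D X = 0) (j : Y m n) (r : Fin (2 * m)) :
    pdE p m n t F r (D j) = 0 := by
  have hmem := mem_frakN_of_notPi (n := n) (F := F) (oneM hb (primeE m r)) ∅ (by simp)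
    (notPi_oneM hb (primeE m r))
  have hoX := oddW_DH_xE_even (n := n) (F := F) (oneM hb (primeE m r)) ∅ (by simp)
  -- X j is supported on `x^(0)x^∅` or zero, so `act D (X j) = 0`
  have hXj : ∀ j' : Y m n,
      act p m n t F D (DH p m n t F (xE p m n t F (oneM hb (primeE m r)) ∅) j') = 0 := by
    intro j'
    cases j' with
    | inl j1 =>
      rw [DH_inl, pdE_xE]
      split
      next h1 =>
        have hps : primeE m j1 = primeE m r := by
          by_contra hne
          rw [oneM_coe, if_neg hne] at h1
          omega
        rw [hps, decM_oneM hb hp, act_smul_right, act_one_zero, smul_zero]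
      next => rw [smul_zero, act_zero_right]
    | inr k =>
      rw [DH_xE_inr _ _ (by simp), pdO_xE, if_neg (Finset.notMem_empty k), act_zero_right]
  funext b
  have key := central_eq hc hmem hoX j b
  rw [hXj j] at key
  -- act X (D j) b = tauF • pdE r (D j) b
  have hact : act p m n t F (DH p m n t F (xE p m n t F (oneM hb (primeE m r)) ∅)) (D j) b
      = tauF m F (primeE m r) * pdE p m n t F r (D j) b := by
    rw [act_split]
    have hz2 : ∀ k ∈ (Finset.univ : Finset (Fin n)),
        mul p m n t F (DH p m n t F (xE p m n t F (oneM hb (primeE m r)) ∅) (Sum.inr k))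
          (pdO p m n t F k (D j)) b = 0 := fun k _ => by
      rw [DH_xE_inr _ _ (by simp), pdO_xE, if_neg (Finset.notMem_empty k), mul_zero_left]
      rfl
    rw [Finset.sum_eq_zero hz2, add_zero]
    rw [Finset.sum_eq_single r ?hvan ?hnm]
    case hvan =>
      intro j1 _ hne
      rw [DH_inl, pdE_xE, if_neg, smul_zero, mul_zero_left]
      · rfl
      rw [oneM_coe, if_neg]
      · omega
      intro hps
      exact hne (by rw [← primeE_primeE (m := m) j1, hps, primeE_primeE])
    case hnm => intro h; exact absurd (Finset.mem_univ r) h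
    rw [DH_inl, pdE_xE, if_pos (by simp), decM_oneM hb hp, mul_smul_left, mul_oneO_left]
    simp
  rw [hact] at key
  have h2 : tauF m F (primeE m r) * pdE p m n t F r (D j) b = 0 := key.symm
  rcases mul_eq_zero.mp h2 with h | h
  · exact absurd h (tauF_ne_zero _)
  · exact h.trans rfl

lemma vanish_of_ne_zero {D : W p m n t F} (hb : ∀ i, 3 < p ^ t i) (hp : 0 < p)
    (hc : ∀ X ∈ frakN p m n t F, bra p m n t F D X = 0) (j : Y m n) (b : BIdx p m n t)
    (i : Fin (2 * m)) (hi : (b.1 i : ℕ) ≠ 0) : D j b = 0 := by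
  have h := step1 hb hp hc j i
  have h' : (if hg : ((decM b.1 i i : Fin (p ^ t i)) : ℕ) + 1 < p ^ t i then
      D j (Function.update (decM b.1 i) i
        (⟨((decM b.1 i i : Fin (p ^ t i)) : ℕ) + 1, hg⟩ : Fin (p ^ t i)), b.2)
    else 0) = 0 := congrFun h ((decM b.1 i, b.2) : BIdx p m n t)
  have hgval : ((decM b.1 i i : Fin (p ^ t i)) : ℕ) = (b.1 i : ℕ) - 1 := by simp
  have hg : ((decM b.1 i i : Fin (p ^ t i)) : ℕ) + 1 < p ^ t i := by
    have h1 := (b.1 i).isLt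
    rw [hgval]
    omega
  rw [dif_pos hg] at h'
  have hupd : (Function.update (decM b.1 i) i
      (⟨((decM b.1 i i : Fin (p ^ t i)) : ℕ) + 1, hg⟩ : Fin (p ^ t i)), b.2) = b := by
    refine Prod.ext (funext fun j' => ?_) rfl
    show Function.update (decM b.1 i) i
      (⟨((decM b.1 i i : Fin (p ^ t i)) : ℕ) + 1, hg⟩ : Fin (p ^ t i)) j' = b.1 j'
    by_cases hj : j' = i
    · subst hj
      rw [Function.update_self]
      apply Fin.ext
      simp
      omega
    · rw [Function.update_of_ne hj]
      apply Fin.ext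
      simp only [decM_coe, if_neg hj]
      omega
  rw [hupd] at h'
  exact h'

lemma step2 {D : W p m n t F} (hb : ∀ i, 3 < p ^ t i) (hp : 0 < p)
    (hc : ∀ X ∈ frakN p m n t F, bra p m n t F D X = 0) (s : Fin (2 * m)) :
    D (Sum.inl s) = 0 := by
  have hmem := mem_frakN_of_notPi (n := n) (F := F) (twoM hb s) ∅ (by simp) (notPi_twoM hb s)
  have hoX := oddW_DH_xE_even (n := n) (F := F) (twoM hb s) ∅ (by simp)
  funext b
  have key := central_eq hc hmem hoX (Sum.inl (primeE m s)) b
  -- RHS: act X (D (inl (primeE m s))) b = 0 (всё via step1)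
  have hR : act p m n t F (DH p m n t F (xE p m n t F (twoM hb s) ∅))
      (D (Sum.inl (primeE m s))) b = 0 := by
    rw [act_split]
    have hz1 : ∀ j' ∈ (Finset.univ : Finset (Fin (2 * m))),
        mul p m n t F (DH p m n t F (xE p m n t F (twoM hb s) ∅) (Sum.inl j'))
          (pdE p m n t F j' (D (Sum.inl (primeE m s)))) b = 0 := fun j' _ => by
      rw [step1 hb hp hc, mul_zero_right]; rfl
    have hz2 : ∀ k ∈ (Finset.univ : Finset (Fin n)),
        mul p m n t F (DH p m n t F (xE p m n t F (twoM hb s) ∅) (Sum.inr k))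
          (pdO p m n t F k (D (Sum.inl (primeE m s)))) b = 0 := fun k _ => by
      rw [DH_xE_inr _ _ (by simp), pdO_xE, if_neg (Finset.notMem_empty k), mul_zero_left]
      rfl
    rw [Finset.sum_eq_zero hz1, Finset.sum_eq_zero hz2, add_zero]
  rw [hR] at key
  -- LHS: act D (X (inl (primeE m s))) b = tauF m F s * D (inl s) b
  have hXl : DH p m n t F (xE p m n t F (twoM hb s) ∅) (Sum.inl (primeE m s))
      = tauF m F s • xE p m n t F (oneM hb s) ∅ := by
    rw [DH_inl, primeE_primeE, pdE_xE, if_pos (by rw [twoM_coe, if_pos rfl]; omega),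
      decM_twoM hb]
  rw [hXl, act_smul_right] at key
  have hactL : act p m n t F D (xE p m n t F (oneM hb s) ∅) b = D (Sum.inl s) b := by
    rw [act_split]
    have hz2 : ∀ k ∈ (Finset.univ : Finset (Fin n)),
        mul p m n t F (D (Sum.inr k)) (pdO p m n t F k (xE p m n t F (oneM hb s) ∅)) b = 0 :=
      fun k _ => by rw [pdO_xE, if_neg (Finset.notMem_empty k), mul_zero_right]; rfl
    rw [Finset.sum_eq_zero hz2, add_zero]
    rw [Finset.sum_eq_single s ?hvan ?hnm]
    case hvan =>
      intro j1 _ hne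
      rw [pdE_xE, if_neg, mul_zero_right]
      · rfl
      rw [oneM_coe, if_neg hne]
      omega
    case hnm => intro h; exact absurd (Finset.mem_univ s) h
    rw [pdE_xE, if_pos (by rw [oneM_coe, if_pos rfl]), decM_oneM hb hp, mul_oneO_right]
  have key2 : tauF m F s * D (Sum.inl s) b = 0 := by
    have h3 := key
    rw [Pi.smul_apply, smul_eq_mul, hactL] at h3
    exact h3
  rcases mul_eq_zero.mp key2 with h | h
  · exact absurd h (tauF_ne_zero _)
  · exact h.trans rfl

end Forward
section EqAB
variable {p m n : ℕ} {t : Fin (2 * m) → ℕ} {F : Type} [Field F]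

lemma subM_self (β : MIdx p m t) (hp : 0 < p) : subM β β = zeroM (t := t) hp :=
  funext fun i => Fin.ext (by simp)

lemma mul_xE_single_zero (hp : 0 < p) (f : O p m n t F) (lq : Fin n) (y : Finset (Fin n)) :
    mul p m n t F f (xE p m n t F (zeroM hp) {lq}) ((zeroM hp, y) : BIdx p m n t)
      = if lq ∈ y then sgn n F (y \ {lq}) {lq} * f (zeroM hp, y \ {lq}) else 0 := by
  rw [mul_xE_right]
  by_cases hly : lq ∈ y
  · rw [if_pos ⟨Finset.singleton_subset_iff.mpr hly, fun i => le_refl _⟩, if_pos hly,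
      subM_self _ hp]
    simp
  · rw [if_neg (fun h => hly (Finset.singleton_subset_iff.mp h.1)), if_neg hly]

lemma mul_xE_empty_at (hp : 0 < p) (β : MIdx p m t) (f : O p m n t F) (y : Finset (Fin n)) :
    mul p m n t F f (xE p m n t F β ∅) ((β, y) : BIdx p m n t) = f (zeroM hp, y) := by
  rw [mul_xE_right, if_pos ⟨Finset.empty_subset _, fun i => le_refl _⟩, sgn_empty_right,
    subM_self _ hp, Finset.sdiff_empty]
  simp

lemma mul_xE_left_single (hp : 0 < p) (β : MIdx p m t) (lq : Fin n) (g : O p m n t F)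
    (y : Finset (Fin n)) :
    mul p m n t F (xE p m n t F β {lq}) g ((β, y) : BIdx p m n t)
      = if lq ∈ y then sgn n F {lq} (y \ {lq}) * g (zeroM hp, y \ {lq}) else 0 := by
  rw [mul_xE_left]
  by_cases hly : lq ∈ y
  · rw [if_pos ⟨Finset.singleton_subset_iff.mpr hly, fun i => le_refl _⟩, if_pos hly,
      subM_self _ hp]
    simp
  · rw [if_neg (fun h => hly (Finset.singleton_subset_iff.mp h.1)), if_neg hly]

lemma card_pair_mod (k l : Fin n) (hkl : k ≠ l) : ({k, l} : Finset (Fin n)).card % 2 = 0 := by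
  rw [Finset.card_insert_of_notMem (by simp [hkl]), Finset.card_singleton]

lemma eqA {D : W p m n t F} (hb : ∀ i, 3 < p ^ t i) (hp : 0 < p) (i₀ : Fin (2 * m))
    (hc : ∀ X ∈ frakN p m n t F, bra p m n t F D X = 0)
    {k l : Fin n} (hkl : k ≠ l) (y : Finset (Fin n)) :
    (if l ∈ y then ((-1 : F) ^ (({l} : Finset (Fin n)).filter (· < k)).card)
        * (sgn n F (y \ {l}) {l} * D (Sum.inr k) (zeroM hp, y \ {l})) else 0)
    + (if k ∈ y then ((-1 : F) ^ (({k} : Finset (Fin n)).filter (· < l)).card)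
        * (sgn n F (y \ {k}) {k} * D (Sum.inr l) (zeroM hp, y \ {k})) else 0) = 0 := by
  have hcard := card_pair_mod k l hkl
  have hmem := mem_frakN_of_notPi (n := n) (F := F) (oneM hb i₀) {k, l}
    (Nat.even_iff.mpr hcard) (notPi_oneM hb i₀)
  have hoX := oddW_DH_xE_even (n := n) (F := F) (oneM hb i₀) {k, l} hcard
  have key := central_eq hc hmem hoX (Sum.inl (primeE m i₀)) ((zeroM hp, y) : BIdx p m n t)
  rw [step2 hb hp hc, act_zero_right] at key
  have hXl : DH p m n t F (xE p m n t F (oneM hb i₀) {k, l}) (Sum.inl (primeE m i₀))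
      = tauF m F i₀ • xE p m n t F (zeroM hp) {k, l} := by
    rw [DH_inl, primeE_primeE, pdE_xE, if_pos (by simp), decM_oneM hb hp]
  rw [hXl, act_smul_right] at key
  have hz1 : ∀ j' ∈ (Finset.univ : Finset (Fin (2 * m))),
      mul p m n t F (D (Sum.inl j'))
        (pdE p m n t F j' (xE p m n t F (zeroM hp) {k, l})) (zeroM hp, y) = 0 := fun j' _ => by
    rw [pdE_xE, if_neg (by simp), mul_zero_right]; rfl
  have hvan : ∀ k' ∈ (Finset.univ : Finset (Fin n)), k' ∉ ({k, l} : Finset (Fin n)) →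
      mul p m n t F (D (Sum.inr k'))
        (pdO p m n t F k' (xE p m n t F (zeroM hp) {k, l})) (zeroM hp, y) = 0 := fun k' _ hk' => by
    rw [pdO_xE, if_neg hk', mul_zero_right]; rfl
  have hterm_k : mul p m n t F (D (Sum.inr k))
      (pdO p m n t F k (xE p m n t F (zeroM hp) {k, l})) (zeroM hp, y)
      = (if l ∈ y then ((-1 : F) ^ (({l} : Finset (Fin n)).filter (· < k)).card)
          * (sgn n F (y \ {l}) {l} * D (Sum.inr k) (zeroM hp, y \ {l})) else 0) := by
    rw [pdO_xE, if_pos (by simp), pair_erase_left hkl, mul_smul_right, Pi.smul_apply,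
      smul_eq_mul, mul_xE_single_zero hp, mul_ite, mul_zero]
  have hterm_l : mul p m n t F (D (Sum.inr l))
      (pdO p m n t F l (xE p m n t F (zeroM hp) {k, l})) (zeroM hp, y)
      = (if k ∈ y then ((-1 : F) ^ (({k} : Finset (Fin n)).filter (· < l)).card)
          * (sgn n F (y \ {k}) {k} * D (Sum.inr l) (zeroM hp, y \ {k})) else 0) := by
    rw [pdO_xE, if_pos (by simp), pair_erase_right hkl, mul_smul_right, Pi.smul_apply,
      smul_eq_mul, mul_xE_single_zero hp, mul_ite, mul_zero]
  have hsplit : act p m n t F D (xE p m n t F (zeroM hp) {k, l}) (zeroM hp, y)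
      = mul p m n t F (D (Sum.inr k))
          (pdO p m n t F k (xE p m n t F (zeroM hp) {k, l})) (zeroM hp, y)
        + mul p m n t F (D (Sum.inr l))
          (pdO p m n t F l (xE p m n t F (zeroM hp) {k, l})) (zeroM hp, y) := by
    rw [act_split, Finset.sum_eq_zero hz1, zero_add,
      ← Finset.sum_subset (Finset.subset_univ ({k, l} : Finset (Fin n))) hvan,
      Finset.sum_pair hkl]
  have key2 : tauF m F i₀ *
      (act p m n t F D (xE p m n t F (zeroM hp) {k, l}) (zeroM hp, y)) = 0 := by
    have h3 := key
    rw [Pi.smul_apply, smul_eq_mul] at h3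
    exact h3.trans rfl
  rw [hsplit, hterm_k, hterm_l] at key2
  rcases mul_eq_zero.mp key2 with h | h
  · exact absurd h (tauF_ne_zero _)
  · exact h

lemma eqB {D : W p m n t F} (hb : ∀ i, 3 < p ^ t i) (hp : 0 < p) (i₀ : Fin (2 * m))
    (hc : ∀ X ∈ frakN p m n t F, bra p m n t F D X = 0)
    {k l : Fin n} (hkl : k ≠ l) (y : Finset (Fin n)) :
    ((-1 : F) ^ (({k} : Finset (Fin n)).filter (· < l)).card) * D (Sum.inr k) (zeroM hp, y)
      = (if l ∈ y then ((-1 : F) ^ (({l} : Finset (Fin n)).filter (· < k)).card)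
          * (sgn n F {l} (y \ {l}) *
            (if k ∈ y \ {l} then 0
             else ((-1 : F) ^ ((y \ {l}).filter (· < k)).card) *
               D (Sum.inr l) (zeroM hp, insert k (y \ {l})))) else 0)
      + (if k ∈ y then ((-1 : F) ^ (({k} : Finset (Fin n)).filter (· < l)).card)
          * (sgn n F {k} (y \ {k}) *
            (if l ∈ y \ {k} then 0
             else ((-1 : F) ^ ((y \ {k}).filter (· < l)).card) *
               D (Sum.inr l) (zeroM hp, insert l (y \ {k})))) else 0) := by
  have hcard := card_pair_mod k l hkl
  have hmem := mem_frakN_of_notPi (n := n) (F := F) (oneM hb i₀) {k, l}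
    (Nat.even_iff.mpr hcard) (notPi_oneM hb i₀)
  have hoX := oddW_DH_xE_even (n := n) (F := F) (oneM hb i₀) {k, l} hcard
  have key := central_eq hc hmem hoX (Sum.inr l) ((oneM hb i₀, y) : BIdx p m n t)
  -- LHS of key
  have hXrl : DH p m n t F (xE p m n t F (oneM hb i₀) {k, l}) (Sum.inr l)
      = ((-1 : F) ^ (({k} : Finset (Fin n)).filter (· < l)).card) •
          xE p m n t F (oneM hb i₀) {k} := by
    rw [DH_xE_inr _ _ hcard, pdO_xE, if_pos (by simp), pair_erase_right hkl]
  have hactL : act p m n t F D (xE p m n t F (oneM hb i₀) {k}) (oneM hb i₀, y)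
      = D (Sum.inr k) (zeroM hp, y) := by
    rw [act_split]
    have hz1 : ∀ j' ∈ (Finset.univ : Finset (Fin (2 * m))),
        mul p m n t F (D (Sum.inl j'))
          (pdE p m n t F j' (xE p m n t F (oneM hb i₀) {k})) (oneM hb i₀, y) = 0 :=
      fun j' _ => by rw [step2 hb hp hc, mul_zero_left]; rfl
    rw [Finset.sum_eq_zero hz1, zero_add]
    rw [Finset.sum_eq_single k ?hvan ?hnm]
    case hvan =>
      intro k' _ hne
      rw [pdO_xE, if_neg (by simp [hne]), mul_zero_right]; rfl
    case hnm => intro h; exact absurd (Finset.mem_univ k) h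
    rw [pdO_xE, if_pos (Finset.mem_singleton_self k), Finset.erase_singleton, mul_smul_right,
      Pi.smul_apply, smul_eq_mul, mul_xE_empty_at hp]
    simp
  -- RHS of key
  have hz2 : ∀ j' ∈ (Finset.univ : Finset (Fin (2 * m))),
      mul p m n t F (DH p m n t F (xE p m n t F (oneM hb i₀) {k, l}) (Sum.inl j'))
        (pdE p m n t F j' (D (Sum.inr l))) (oneM hb i₀, y) = 0 := fun j' _ => by
    rw [step1 hb hp hc, mul_zero_right]; rfl
  have hvan2 : ∀ k' ∈ (Finset.univ : Finset (Fin n)), k' ∉ ({k, l} : Finset (Fin n)) →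
      mul p m n t F (DH p m n t F (xE p m n t F (oneM hb i₀) {k, l}) (Sum.inr k'))
        (pdO p m n t F k' (D (Sum.inr l))) (oneM hb i₀, y) = 0 := fun k' _ hk' => by
    rw [DH_xE_inr _ _ hcard, pdO_xE, if_neg hk', mul_zero_left]; rfl
  have hpdk : pdO p m n t F k (D (Sum.inr l)) ((zeroM hp, y \ {l}) : BIdx p m n t)
      = if k ∈ y \ {l} then 0
        else ((-1 : F) ^ ((y \ {l}).filter (· < k)).card) *
          D (Sum.inr l) (zeroM hp, insert k (y \ {l})) := rfl
  have hpdl : pdO p m n t F l (D (Sum.inr l)) ((zeroM hp, y \ {k}) : BIdx p m n t)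
      = if l ∈ y \ {k} then 0
        else ((-1 : F) ^ ((y \ {k}).filter (· < l)).card) *
          D (Sum.inr l) (zeroM hp, insert l (y \ {k})) := rfl
  have hterm_k : mul p m n t F (DH p m n t F (xE p m n t F (oneM hb i₀) {k, l}) (Sum.inr k))
      (pdO p m n t F k (D (Sum.inr l))) (oneM hb i₀, y)
      = (if l ∈ y then ((-1 : F) ^ (({l} : Finset (Fin n)).filter (· < k)).card)
          * (sgn n F {l} (y \ {l}) *
            (if k ∈ y \ {l} then 0
             else ((-1 : F) ^ ((y \ {l}).filter (· < k)).card) *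
               D (Sum.inr l) (zeroM hp, insert k (y \ {l})))) else 0) := by
    rw [DH_xE_inr _ _ hcard, pdO_xE, if_pos (by simp), pair_erase_left hkl, mul_smul_left,
      Pi.smul_apply, smul_eq_mul, mul_xE_left_single hp, hpdk, mul_ite, mul_zero]
  have hterm_l : mul p m n t F (DH p m n t F (xE p m n t F (oneM hb i₀) {k, l}) (Sum.inr l))
      (pdO p m n t F l (D (Sum.inr l))) (oneM hb i₀, y)
      = (if k ∈ y then ((-1 : F) ^ (({k} : Finset (Fin n)).filter (· < l)).card)
          * (sgn n F {k} (y \ {k}) *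
            (if l ∈ y \ {k} then 0
             else ((-1 : F) ^ ((y \ {k}).filter (· < l)).card) *
               D (Sum.inr l) (zeroM hp, insert l (y \ {k})))) else 0) := by
    rw [DH_xE_inr _ _ hcard, pdO_xE, if_pos (by simp), pair_erase_right hkl, mul_smul_left,
      Pi.smul_apply, smul_eq_mul, mul_xE_left_single hp, hpdl, mul_ite, mul_zero]
  have hR : act p m n t F (DH p m n t F (xE p m n t F (oneM hb i₀) {k, l}))
      (D (Sum.inr l)) (oneM hb i₀, y)
      = mul p m n t F (DH p m n t F (xE p m n t F (oneM hb i₀) {k, l}) (Sum.inr k))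
          (pdO p m n t F k (D (Sum.inr l))) (oneM hb i₀, y)
        + mul p m n t F (DH p m n t F (xE p m n t F (oneM hb i₀) {k, l}) (Sum.inr l))
          (pdO p m n t F l (D (Sum.inr l))) (oneM hb i₀, y) := by
    rw [act_split, Finset.sum_eq_zero hz2, zero_add,
      ← Finset.sum_subset (Finset.subset_univ ({k, l} : Finset (Fin n))) hvan2,
      Finset.sum_pair hkl]
  have key2 : ((-1 : F) ^ (({k} : Finset (Fin n)).filter (· < l)).card) *
      D (Sum.inr k) (zeroM hp, y)
      = act p m n t F (DH p m n t F (xE p m n t F (oneM hb i₀) {k, l}))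
          (D (Sum.inr l)) (oneM hb i₀, y) := by
    rw [← hactL]
    have h3 := key
    rw [hXrl, act_smul_right, Pi.smul_apply, smul_eq_mul] at h3
    exact h3
  rw [key2, hR, hterm_k, hterm_l]

end EqAB
section Conseq
variable {p m n : ℕ} {t : Fin (2 * m) → ℕ} {F : Type} [Field F]
variable {D : W p m n t F}

lemma conse1 (hb : ∀ i, 3 < p ^ t i) (hp : 0 < p) (i₀ : Fin (2 * m))
    (hc : ∀ X ∈ frakN p m n t F, bra p m n t F D X = 0)
    (k : Fin n) (z : Finset (Fin n)) (hkz : k ∉ z) (hz : z ≠ Finset.univ.erase k) :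
    D (Sum.inr k) (zeroM hp, z) = 0 := by
  have hins : insert k z ≠ Finset.univ := by
    intro h
    exact hz (by rw [← h, Finset.erase_insert hkz])
  obtain ⟨l, hl⟩ : ∃ l, l ∉ insert k z := by
    by_contra hno
    push_neg at hno
    exact hins (Finset.eq_univ_iff_forall.mpr hno)
  have hlz : l ∉ z := fun h => hl (Finset.mem_insert_of_mem h)
  have hlk : l ≠ k := fun h => hl (h ▸ Finset.mem_insert_self k z)
  have h := eqA hb hp i₀ hc (k := k) (l := l) (fun h' => hlk h'.symm) (insert l z)
  have hky : k ∉ insert l z := by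
    simp only [Finset.mem_insert]
    rintro (rfl | hh)
    · exact hlk rfl
    · exact hkz hh
  have hdiff : (insert l z) \ {l} = z := by
    rw [← Finset.erase_eq, Finset.erase_insert hlz]
  rw [if_pos (Finset.mem_insert_self l z), if_neg hky, hdiff, add_zero] at h
  rcases mul_eq_zero.mp h with h' | h'
  · exact absurd h' (neg_one_pow_ne_zero _)
  rcases mul_eq_zero.mp h' with h'' | h''
  · exact absurd h'' (sgn_ne_zero _ _)
  · exact h''

lemma conse2 (hb : ∀ i, 3 < p ^ t i) (hp : 0 < p) (i₀ : Fin (2 * m))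
    (hc : ∀ X ∈ frakN p m n t F, bra p m n t F D X = 0)
    (k : Fin n) (y : Finset (Fin n)) (hky : k ∈ y) (l : Fin n) (hly : l ∈ y) (hlk : l ≠ k) :
    D (Sum.inr k) (zeroM hp, y) = 0 := by
  have h := eqB hb hp i₀ hc (k := k) (l := l) (Ne.symm hlk) y
  have hk1 : k ∈ y \ {l} := Finset.mem_sdiff.mpr ⟨hky, by simp [Ne.symm hlk]⟩
  have hl1 : l ∈ y \ {k} := Finset.mem_sdiff.mpr ⟨hly, by simp [hlk]⟩
  rw [if_pos hly, if_pos hky, if_pos hk1, if_pos hl1, mul_zero, mul_zero, mul_zero, mul_zero,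
    add_zero] at h
  rcases mul_eq_zero.mp h with h' | h'
  · exact absurd h' (neg_one_pow_ne_zero _)
  · exact h'

lemma conse3_pair (hb : ∀ i, 3 < p ^ t i) (hp : 0 < p) (i₀ : Fin (2 * m))
    (hc : ∀ X ∈ frakN p m n t F, bra p m n t F D X = 0)
    {k l : Fin n} (hkl : k ≠ l) :
    D (Sum.inr k) (zeroM hp, {k}) + D (Sum.inr l) (zeroM hp, {l}) = 0 := by
  have h := eqA hb hp i₀ hc hkl ({k, l} : Finset (Fin n))
  have hd1 : ({k, l} : Finset (Fin n)) \ {l} = {k} := by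
    rw [← Finset.erase_eq]; exact pair_erase_right hkl
  have hd2 : ({k, l} : Finset (Fin n)) \ {k} = {l} := by
    rw [← Finset.erase_eq]; exact pair_erase_left hkl
  rw [if_pos (by simp), if_pos (by simp), hd1, hd2] at h
  have e1 : ((-1 : F) ^ (({l} : Finset (Fin n)).filter (· < k)).card) * sgn n F {k} {l} = 1 := by
    rw [sgn_singleton_left, ← pow_add]
    exact Even.neg_one_pow ⟨_, rfl⟩
  have e2 : ((-1 : F) ^ (({k} : Finset (Fin n)).filter (· < l)).card) * sgn n F {l} {k} = 1 := by
    rw [sgn_singleton_left, ← pow_add]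
    exact Even.neg_one_pow ⟨_, rfl⟩
  calc D (Sum.inr k) (zeroM hp, {k}) + D (Sum.inr l) (zeroM hp, {l})
      = ((-1 : F) ^ (({l} : Finset (Fin n)).filter (· < k)).card)
          * (sgn n F {k} {l} * D (Sum.inr k) (zeroM hp, {k}))
        + ((-1 : F) ^ (({k} : Finset (Fin n)).filter (· < l)).card)
          * (sgn n F {l} {k} * D (Sum.inr l) (zeroM hp, {l})) := by
        rw [show ((-1 : F) ^ (({l} : Finset (Fin n)).filter (· < k)).card)
            * (sgn n F {k} {l} * D (Sum.inr k) (zeroM hp, {k}))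
          = (((-1 : F) ^ (({l} : Finset (Fin n)).filter (· < k)).card) * sgn n F {k} {l})
            * D (Sum.inr k) (zeroM hp, {k}) from by ring,
          show ((-1 : F) ^ (({k} : Finset (Fin n)).filter (· < l)).card)
            * (sgn n F {l} {k} * D (Sum.inr l) (zeroM hp, {l}))
          = (((-1 : F) ^ (({k} : Finset (Fin n)).filter (· < l)).card) * sgn n F {l} {k})
            * D (Sum.inr l) (zeroM hp, {l}) from by ring, e1, e2, one_mul, one_mul]
    _ = 0 := h

lemma conse3 (hb : ∀ i, 3 < p ^ t i) (hp : 0 < p) (i₀ : Fin (2 * m)) (hn : 3 < n)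
    (h2F : (2 : F) ≠ 0)
    (hc : ∀ X ∈ frakN p m n t F, bra p m n t F D X = 0) (k : Fin n) :
    D (Sum.inr k) (zeroM hp, {k}) = 0 := by
  obtain ⟨l, hl⟩ : ∃ l : Fin n, l ∉ ({k} : Finset (Fin n)) := by
    by_contra hno
    push_neg at hno
    have h3 : (Finset.univ : Finset (Fin n)).card ≤ ({k} : Finset (Fin n)).card :=
      Finset.card_le_card (fun x _ => hno x)
    rw [Finset.card_univ, Fintype.card_fin, Finset.card_singleton] at h3
    omega
  obtain ⟨r, hr⟩ : ∃ r : Fin n, r ∉ ({k, l} : Finset (Fin n)) := by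
    by_contra hno
    push_neg at hno
    have h3 : (Finset.univ : Finset (Fin n)).card ≤ ({k, l} : Finset (Fin n)).card :=
      Finset.card_le_card (fun x _ => hno x)
    have h4 : ({k, l} : Finset (Fin n)).card ≤ 2 := Finset.card_insert_le _ _ |>.trans (by simp)
    rw [Finset.card_univ, Fintype.card_fin] at h3
    omega
  have hkl : k ≠ l := fun h => (by simpa using hl : l ≠ k) h.symm
  have hkr : k ≠ r := fun h => hr (by simp [← h])
  have hlr : l ≠ r := fun h => hr (by simp [← h])
  have P1 := conse3_pair hb hp i₀ hc hkl
  have P2 := conse3_pair hb hp i₀ hc hkr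
  have P3 := conse3_pair hb hp i₀ hc hlr
  have h2 : (2 : F) * D (Sum.inr k) (zeroM hp, {k}) = 0 := by linear_combination P1 + P2 - P3
  exact (mul_eq_zero.mp h2).resolve_left h2F

lemma insert_erase_swap (k k0 : Fin n) (h : k ≠ k0) :
    insert k ((Finset.univ.erase k) \ {k0}) = Finset.univ.erase k0 := by
  rw [← Finset.erase_eq]
  ext a
  simp only [Finset.mem_insert, Finset.mem_erase, Finset.mem_univ, and_true]
  constructor
  · rintro (rfl | ⟨h1, h2⟩)
    · exact h
    · exact h1
  · intro ha
    by_cases hak : a = k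
    · exact Or.inl hak
    · exact Or.inr ⟨ha, hak⟩

lemma conse4 (hb : ∀ i, 3 < p ^ t i) (hp : 0 < p) (i₀ : Fin (2 * m))
    (hc : ∀ X ∈ frakN p m n t F, bra p m n t F D X = 0) (k0 : Fin n)
    (hbase : D (Sum.inr k0) (zeroM hp, Finset.univ.erase k0) = 0) (k : Fin n) :
    D (Sum.inr k) (zeroM hp, Finset.univ.erase k) = 0 := by
  by_cases hkk0 : k = k0
  · subst hkk0; exact hbase
  have h := eqB hb hp i₀ hc (k := k) (l := k0) hkk0 (Finset.univ.erase k)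
  have hk0mem : k0 ∈ Finset.univ.erase k :=
    Finset.mem_erase.mpr ⟨fun hh => hkk0 hh.symm, Finset.mem_univ k0⟩
  have hknot : k ∉ (Finset.univ.erase k) \ {k0} :=
    fun hmem => (Finset.notMem_erase k _) (Finset.mem_sdiff.mp hmem).1
  rw [if_pos hk0mem, if_neg (Finset.notMem_erase k _), if_neg hknot,
    insert_erase_swap k k0 hkk0, hbase, mul_zero, mul_zero, mul_zero, add_zero] at h
  rcases mul_eq_zero.mp h with h' | h'
  · exact absurd h' (neg_one_pow_ne_zero _)
  · exact h'

lemma D_zero (hb : ∀ i, 3 < p ^ t i) (hp : 0 < p) (i₀ : Fin (2 * m)) (hn : 3 < n)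
    (h2F : (2 : F) ≠ 0)
    (hc : ∀ X ∈ frakN p m n t F, bra p m n t F D X = 0) (k0 : Fin n)
    (hbase : D (Sum.inr k0) (zeroM hp, Finset.univ.erase k0) = 0) :
    D = 0 := by
  funext j b
  match j with
  | Sum.inl s => rw [step2 hb hp hc]; rfl
  | Sum.inr k =>
    by_cases hβ : ∀ i : Fin (2 * m), (b.1 i : ℕ) = 0
    case neg =>
      push_neg at hβ
      obtain ⟨i, hi⟩ := hβ
      exact (vanish_of_ne_zero hb hp hc _ b i hi).trans rfl
    case pos =>
      have hbe : b = ((zeroM hp, b.2) : BIdx p m n t) :=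
        Prod.ext (funext fun i => Fin.ext (hβ i)) rfl
      rw [hbe]
      show D (Sum.inr k) (zeroM hp, b.2) = (0 : W p m n t F) (Sum.inr k) (zeroM hp, b.2)
      by_cases hky : k ∈ b.2
      · by_cases hsing : b.2 = {k}
        · rw [hsing]
          exact (conse3 hb hp i₀ hn h2F hc k).trans rfl
        · have hex : ∃ l ∈ b.2, l ≠ k := by
            by_contra hno
            push_neg at hno
            exact hsing (Finset.eq_singleton_iff_unique_mem.mpr ⟨hky, hno⟩)
          obtain ⟨l, hl, hlk⟩ := hex
          exact (conse2 hb hp i₀ hc k b.2 hky l hl hlk).trans rfl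
      · by_cases herase : b.2 = Finset.univ.erase k
        · rw [herase]
          exact (conse4 hb hp i₀ hc k0 hbase k).trans rfl
        · exact (conse1 hb hp i₀ hc k b.2 hky herase).trans rfl

end Conseq
section Final
variable {p m n : ℕ} {t : Fin (2 * m) → ℕ} {F : Type} [Field F]

lemma bra_smul_left (c : F) (E X : W p m n t F) :
    bra p m n t F (c • E) X = c • bra p m n t F E X := by
  funext j b
  simp only [bra, Pi.add_apply, Pi.sub_apply, Pi.smul_apply]
  rw [act_smul_left, act_smul_right, oddW_smul]
  simp only [Pi.smul_apply]
  rw [act_smul_right]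
  simp only [Pi.smul_apply, smul_eq_mul]
  ring

lemma braOmega_frakN (hp : 0 < p) (hne : Even n)
    (X : W p m n t F) (hX : X ∈ frakN p m n t F) :
    bra p m n t F (DH p m n t F (xE p m n t F (zeroM hp) Finset.univ)) X = 0 := by
  induction hX using Submodule.span_induction with
  | mem x hx =>
    obtain ⟨α, u, hu, -, -, rfl⟩ := hx
    exact braOmega hp hne α u (Nat.even_iff.mp hu)
  | zero => exact bra_zero_right _
  | add x y hx hy ihx ihy => rw [bra_add_right, ihx, ihy, add_zero]
  | smul a x hx ih => rw [bra_smul_right, ih, smul_zero]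

lemma calW_smul_omega (hp : 0 < p) (hne : Even n) (c : F) :
    c • DH p m n t F (xE p m n t F (zeroM hp) Finset.univ) ∈ calW p m n t F := by
  intro j b hcond
  match j with
  | Sum.inl j0 =>
    show (c • DH p m n t F (xE p m n t F (zeroM hp) Finset.univ)) (Sum.inl j0) b = 0
    rw [Pi.smul_apply, Pi.smul_apply, DH_omega_inl hp, Pi.zero_apply, smul_zero]
  | Sum.inr k =>
    show (c • DH p m n t F (xE p m n t F (zeroM hp) Finset.univ)) (Sum.inr k) b = 0
    rw [Pi.smul_apply, Pi.smul_apply, DH_omega_inr hp hne, Pi.smul_apply, smul_eq_mul,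
      smul_eq_mul]
    by_cases hb2 : b.2 = Finset.univ.erase k
    · exfalso
      apply hcond
      rw [hb2, Finset.card_erase_of_mem (Finset.mem_univ k), Finset.card_univ,
        Fintype.card_fin]
      show (n - 1 + 1) % 2 = 0
      have hk := k.isLt
      rw [Nat.even_iff] at hne
      omega
    · rw [xE, if_neg (fun h => hb2 (congrArg Prod.snd h)), mul_zero, mul_zero]

theorem stmt1' (hp3 : 3 < p) (hchar : CharP F p) (hm : 1 < m) (hn : 3 < n)
    (ht : ∀ i, 1 ≤ t i) (hne : Even n) :
    ∀ D : W p m n t F,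
      (D ∈ calW p m n t F ∧ ∀ X ∈ frakN p m n t F, bra p m n t F D X = 0) ↔
      ∃ c : F, D = c • DH p m n t F (xOmega p m n t F) := by
  have hp : 0 < p := by omega
  have hb : ∀ i, 3 < p ^ t i := fun i => by
    calc (3 : ℕ) < p := hp3
    _ = p ^ 1 := (pow_one p).symm
    _ ≤ p ^ t i := Nat.pow_le_pow_right (by omega) (ht i)
  have h2F : (2 : F) ≠ 0 := by
    intro h
    have h2 : ((2 : ℕ) : F) = 0 := by exact_mod_cast h
    have := (CharP.cast_eq_zero_iff F p 2).mp h2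
    have := Nat.le_of_dvd (by norm_num) this
    omega
  intro D
  rw [xOmega_eq (t := t) (F := F) hp]
  constructor
  · rintro ⟨-, hc⟩
    set k0 : Fin n := ⟨0, by omega⟩ with hk0
    set i₀ : Fin (2 * m) := ⟨0, by omega⟩ with hi₀
    set ρ : F := (-1 : F) ^ ((Finset.univ.erase k0).filter (· < k0)).card with hρ
    refine ⟨ρ * D (Sum.inr k0) (zeroM hp, Finset.univ.erase k0), ?_⟩
    set c : F := ρ * D (Sum.inr k0) (zeroM hp, Finset.univ.erase k0) with hcdef
    have hρρ : ρ * ρ = 1 := by rw [hρ, ← pow_add]; exact Even.neg_one_pow ⟨_, rfl⟩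
    have hc' : ∀ X ∈ frakN p m n t F,
        bra p m n t F (D - c • DH p m n t F (xE p m n t F (zeroM hp) Finset.univ)) X = 0 := by
      intro X hX
      rw [bra_sub_smul_left, hc X hX, braOmega_frakN hp hne X hX, smul_zero, sub_zero]
    have hbase : (D - c • DH p m n t F (xE p m n t F (zeroM hp) Finset.univ)) (Sum.inr k0)
        (zeroM hp, Finset.univ.erase k0) = 0 := by
      have hval : DH p m n t F (xE p m n t F (zeroM hp) Finset.univ) (Sum.inr k0)
          ((zeroM hp, Finset.univ.erase k0) : BIdx p m n t) = ρ := by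
        rw [DH_omega_inr hp hne, Pi.smul_apply, smul_eq_mul, xE, if_pos rfl, mul_one]
      simp only [Pi.sub_apply, Pi.smul_apply, smul_eq_mul]
      rw [hval, hcdef]
      calc D (Sum.inr k0) (zeroM hp, Finset.univ.erase k0)
          - ρ * D (Sum.inr k0) (zeroM hp, Finset.univ.erase k0) * ρ
          = D (Sum.inr k0) (zeroM hp, Finset.univ.erase k0) * (1 - ρ * ρ) := by ring
        _ = 0 := by rw [hρρ]; ring
    have hz := D_zero hb hp i₀ hn h2F hc' k0 hbase
    exact sub_eq_zero.mp hz
  · rintro ⟨c, rfl⟩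
    exact ⟨calW_smul_omega hp hne c, fun X hX => by
      rw [bra_smul_left, braOmega_frakN hp hne X hX, smul_zero]⟩

end Final
/-- if `n` is even, the centralizer of `𝔑` in `𝒲` is `F · D_H(x^ω)`. -/
theorem stmt1 (p m n : ℕ) (t : Fin (2 * m) → ℕ) (F : Type) [Field F]
    (hp : 3 < p) (hchar : CharP F p) (hm : 1 < m) (hn : 3 < n) (ht : ∀ i, 1 ≤ t i) (hne : Even n) :
    ∀ D : W p m n t F,
      (D ∈ calW p m n t F ∧ ∀ X ∈ frakN p m n t F, bra p m n t F D X = 0) ↔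
      ∃ c : F, D = c • DH p m n t F (xOmega p m n t F) :=
  stmt1' hp hchar hm hn ht hne

end HamEven
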